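/- arXiv:1905.10513 — 3 statements merged into one kernel-verified Lean document; each statement's English description precedes it below -/
import Mathlib

section
/- Fix q, a ∈ ℂ and let F ∈ ℂ[[z]]. Define c_0 = [z^0]{F} and, for n ≥ 1, c_n = [z^n]{ F · (az;q)_n^{−1} } − a · ∑_{k=0}^{n−1} B_{n−k,1}(a,0) q^{(n−k)k} · [z^k]{ F · (az;q)_{k+1}^{−1} }. Then F = ∑_{n=0}^∞ c_n z^n (az;q)_n coefficientwise: for every N ≥ 0, [z^N]{F} = ∑_{n=0}^{N} c_n · [z^N]{ z^n (az;q)_n }. -/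
open PowerSeries Finset

/-- The polynomial `(az;q)_n = ∏_{i=0}^{n-1} (1 - a q^i z)` viewed in `ℂ[[z]]`. -/
noncomputable def qpoly (q x : ℂ) (n : ℕ) : PowerSeries ℂ :=
  ∏ i ∈ Finset.range n, (1 - PowerSeries.C (x * q ^ i) * PowerSeries.X)


def vq (q : ℂ) : ℕ → ℕ → ℂ
  | _, 0 => 1
  | 0, _+1 => 0
  | n+1, t+1 => q^n * vq q (n+1) t + vq q n (t+1)
termination_by n t => n + t

lemma vq_zero_right (q : ℂ) (n : ℕ) : vq q n 0 = 1 := by cases n <;> rw [vq]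

lemma vq_zero_left (q : ℂ) (t : ℕ) : vq q 0 (t+1) = 0 := by rw [vq]

lemma vq_succ_succ (q : ℂ) (n t : ℕ) :
    vq q (n+1) (t+1) = q^n * vq q (n+1) t + vq q n (t+1) := by
  rw [vq]

lemma vq_one_left (q : ℂ) (t : ℕ) : vq q 1 t = 1 := by
  induction t with
  | zero => rw [vq_zero_right]
  | succ t ih => rw [vq_succ_succ, ih, vq_zero_left]; ring

lemma vq_one_right (q : ℂ) (n : ℕ) : vq q n 1 = ∑ i ∈ Finset.range n, q^i := by
  induction n with
  | zero => simp [vq_zero_left]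
  | succ n ih =>
    rw [vq_succ_succ, ih, vq_zero_right, Finset.sum_range_succ]; ring

lemma vq_R2 (q : ℂ) : ∀ n t : ℕ, vq q (n+1) (t+1) = vq q (n+1) t + q^(t+1) * vq q n (t+1) := by
  intro n
  induction n with
  | zero =>
    intro t
    rw [vq_one_left, vq_one_left, vq_zero_left]; ring
  | succ n ih =>
    intro t
    induction t with
    | zero =>
      rw [vq_one_right, vq_one_right, vq_zero_right, geom_sum_succ]; ring
    | succ t iht =>
      linear_combination (vq_succ_succ q (n+1) (t+1)) + q^(n+1) * iht
        - (vq_succ_succ q (n+1) t) - q^(t+2) * (vq_succ_succ q n (t+1)) + ih (t+1)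

lemma vq_symm (q : ℂ) : ∀ n t : ℕ, vq q (n+1) t = vq q (t+1) n := by
  have key : ∀ k n t : ℕ, n + t = k → vq q (n+1) t = vq q (t+1) n := by
    intro k
    induction k using Nat.strong_induction_on with
    | _ k ihk =>
      intro n t hk
      match n, t with
      | n, 0 => rw [vq_zero_right, vq_one_left]
      | 0, t+1 => rw [vq_one_left, vq_zero_right]
      | n+1, t+1 =>
        rw [vq_succ_succ, ihk (n + (t+1)) (by omega) n (t+1) rfl,
          ihk ((n+1) + t) (by omega) (n+1) t rfl, vq_R2 q (t+1) n]
        ring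
  intro n t; exact key (n+t) n t rfl

lemma QB.inv_eq (f h : PowerSeries ℂ) (hfh : f * h = 1) : f⁻¹ = h := by
  have hc : constantCoeff f ≠ 0 := by
    intro h0
    have := congrArg (constantCoeff) hfh
    simp [h0] at this
  calc f⁻¹ = f⁻¹ * (f * h) := by rw [hfh, mul_one]
    _ = (f⁻¹ * f) * h := by ring
    _ = h := by rw [PowerSeries.inv_mul_cancel f hc, one_mul]

lemma QB.constantCoeff_qpoly (q x : ℂ) (n : ℕ) : constantCoeff (qpoly q x n) = 1 := by
  unfold qpoly
  rw [map_prod]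
  apply Finset.prod_eq_one
  intro i _
  simp

lemma QB.qpoly_zero (q x : ℂ) : qpoly q x 0 = 1 := by simp [qpoly]

lemma QB.qpoly_succ (q x : ℂ) (n : ℕ) :
    qpoly q x (n+1) = qpoly q x n * (1 - PowerSeries.C (x * q ^ n) * PowerSeries.X) :=
  Finset.prod_range_succ _ n

lemma QB.qpoly_mul_inv (q x : ℂ) (n : ℕ) : qpoly q x n * (qpoly q x n)⁻¹ = 1 :=
  PowerSeries.mul_inv_cancel _ (by rw [QB.constantCoeff_qpoly]; exact one_ne_zero)

lemma QB.qpoly_add (q x : ℂ) (m r : ℕ) :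
    qpoly q x (m + r) = qpoly q x m * qpoly q (x * q ^ m) r := by
  unfold qpoly
  rw [Finset.prod_range_add]
  congr 1
  apply Finset.prod_congr rfl
  intro i _
  rw [pow_add]
  ring_nf

lemma QB.coeff_inv_qpoly_zero (q x : ℂ) (n : ℕ) :
    (PowerSeries.coeff 0) ((qpoly q x n)⁻¹) = 1 := by
  rw [PowerSeries.coeff_zero_eq_constantCoeff, PowerSeries.constantCoeff_inv,
    QB.constantCoeff_qpoly, inv_one]

/-- R1 recursion for coefficients of the inverse. -/
lemma QB.coeff_inv_succ (q x : ℂ) (n t : ℕ) :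
    (PowerSeries.coeff (t+1)) ((qpoly q x (n+1))⁻¹)
      = x * q ^ n * (PowerSeries.coeff t) ((qpoly q x (n+1))⁻¹)
        + (PowerSeries.coeff (t+1)) ((qpoly q x n)⁻¹) := by
  have key : (qpoly q x n)⁻¹
      = (1 - PowerSeries.C (x * q ^ n) * PowerSeries.X) * (qpoly q x (n+1))⁻¹ := by
    apply QB.inv_eq
    calc qpoly q x n * ((1 - PowerSeries.C (x * q ^ n) * PowerSeries.X) * (qpoly q x (n+1))⁻¹)
        = qpoly q x (n+1) * (qpoly q x (n+1))⁻¹ := by rw [QB.qpoly_succ]; ring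
      _ = 1 := QB.qpoly_mul_inv q x (n+1)
  rw [key]
  set g := (qpoly q x (n+1))⁻¹
  have expand : (1 - PowerSeries.C (x * q ^ n) * PowerSeries.X) * g
      = g - PowerSeries.C (x * q ^ n) * (PowerSeries.X * g) := by ring
  rw [expand, map_sub, PowerSeries.coeff_C_mul, PowerSeries.coeff_succ_X_mul]
  ring


lemma QB.coeff_inv_qpoly (q x : ℂ) : ∀ n t : ℕ,
    (PowerSeries.coeff t) ((qpoly q x n)⁻¹) = x ^ t * vq q n t := by
  have vzr := vq_zero_right q
  have vss := vq_succ_succ q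
  intro n
  induction n with
  | zero =>
    intro t
    have h1 : (qpoly q x 0)⁻¹ = 1 := QB.inv_eq _ _ (by rw [QB.qpoly_zero, one_mul])
    rw [h1]
    cases t with
    | zero => simp [vzr]
    | succ t => rw [vq_zero_left]; simp
  | succ n ih =>
    intro t
    induction t with
    | zero => rw [QB.coeff_inv_qpoly_zero, vzr, pow_zero, one_mul]
    | succ t iht =>
      rw [QB.coeff_inv_succ, iht, ih (t+1), vss]
      ring

lemma QB.coeff_mul_range (N : ℕ) (f g : PowerSeries ℂ) :
    (PowerSeries.coeff N) (f * g)
      = ∑ k ∈ range (N+1), (PowerSeries.coeff k) f * (PowerSeries.coeff (N - k)) g := by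
  rw [PowerSeries.coeff_mul, Finset.Nat.sum_antidiagonal_eq_sum_range_succ_mk]

lemma QB.coeff_xpow_mul_zero (f : PowerSeries ℂ) (s N : ℕ) (h : N < s) :
    (PowerSeries.coeff N) (PowerSeries.X ^ s * f) = 0 := by
  rw [PowerSeries.coeff_X_pow_mul', if_neg (by omega)]

lemma QB.rescale_C (c r : ℂ) : rescale c (PowerSeries.C r) = PowerSeries.C r := by
  ext n
  rw [PowerSeries.coeff_rescale]
  cases n with
  | zero => simp
  | succ n => simp [PowerSeries.coeff_C]

lemma QB.rescale_qpoly (c q x : ℂ) (n : ℕ) :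
    rescale c (qpoly q x n) = qpoly q (x * c) n := by
  unfold qpoly
  rw [map_prod]
  apply Finset.prod_congr rfl
  intro i _
  rw [map_sub, map_one, map_mul, QB.rescale_C, rescale_X]
  have h : x * q ^ i * c = x * c * q ^ i := by ring
  rw [← mul_assoc, ← map_mul, h]

lemma QB.hB1_scaled (q a : ℂ) (B1 : ℕ → ℂ)
    (hB1 : ∀ N : ℕ, 1 ≤ N →
      (PowerSeries.coeff N) (PowerSeries.X : PowerSeries ℂ) =
        ∑ n ∈ Finset.Icc 1 N,
          B1 n * (PowerSeries.coeff N) (PowerSeries.X ^ n * qpoly q a n))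
    (m : ℕ) : ∀ n N : ℕ, N ≤ n →
    q ^ m * (PowerSeries.coeff N) (PowerSeries.X : PowerSeries ℂ)
      = ∑ s ∈ Finset.Icc 1 n,
          B1 s * q ^ (s * m)
            * (PowerSeries.coeff N) (PowerSeries.X ^ s * qpoly q (a * q ^ m) s) := by
  intro n N hNn
  rcases Nat.eq_zero_or_pos N with h0 | hpos
  · subst h0
    rw [PowerSeries.coeff_X, if_neg (by omega), mul_zero]
    symm
    apply Finset.sum_eq_zero
    intro s hs
    rw [QB.coeff_xpow_mul_zero _ _ _ (mem_Icc.mp hs).1, mul_zero]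
  · -- pointwise rescaling identity
    have hpt : ∀ s : ℕ, q ^ (m * N) * (PowerSeries.coeff N) (PowerSeries.X ^ s * qpoly q a s)
        = q ^ (s * m) * (PowerSeries.coeff N) (PowerSeries.X ^ s * qpoly q (a * q ^ m) s) := by
      intro s
      have hres : rescale (q ^ m) (PowerSeries.X ^ s * qpoly q a s)
          = PowerSeries.C ((q ^ m) ^ s) * (PowerSeries.X ^ s * qpoly q (a * q ^ m) s) := by
        rw [map_mul, map_pow, rescale_X, QB.rescale_qpoly, mul_pow, ← map_pow, mul_assoc]
      have := PowerSeries.coeff_rescale (PowerSeries.X ^ s * qpoly q a s) (q ^ m) N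
      rw [hres, PowerSeries.coeff_C_mul] at this
      rw [mul_comm s m, pow_mul q m N, pow_mul q m s]
      exact this.symm
    have hq : q ^ m * (PowerSeries.coeff N) (PowerSeries.X : PowerSeries ℂ)
        = q ^ (m * N) * (PowerSeries.coeff N) (PowerSeries.X : PowerSeries ℂ) := by
      by_cases h1 : N = 1
      · subst h1; rw [mul_one]
      · rw [PowerSeries.coeff_X, if_neg h1, mul_zero, mul_zero]
    rw [hq, hB1 N hpos, Finset.mul_sum]
    have step : ∀ s ∈ Finset.Icc 1 N,
        q ^ (m * N) * (B1 s * (PowerSeries.coeff N) (PowerSeries.X ^ s * qpoly q a s))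
          = B1 s * q ^ (s * m)
              * (PowerSeries.coeff N) (PowerSeries.X ^ s * qpoly q (a * q ^ m) s) := by
      intro s _
      rw [← mul_assoc, mul_comm (q ^ (m*N)) (B1 s), mul_assoc, hpt s, ← mul_assoc]
    rw [Finset.sum_congr rfl step]
    apply Finset.sum_subset (Finset.Icc_subset_Icc_right hNn)
    intro s hs hns
    have : N < s := by
      simp only [mem_Icc] at hs hns
      omega
    rw [QB.coeff_xpow_mul_zero _ _ _ this, mul_zero]

lemma QB.lemA (q a : ℂ) (B1 : ℕ → ℂ)
    (hB1 : ∀ N : ℕ, 1 ≤ N →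
      (PowerSeries.coeff N) (PowerSeries.X : PowerSeries ℂ) =
        ∑ n ∈ Finset.Icc 1 N,
          B1 n * (PowerSeries.coeff N) (PowerSeries.X ^ n * qpoly q a n))
    (m : ℕ) (W : PowerSeries ℂ) (n : ℕ) :
    q ^ m * (PowerSeries.coeff n) (PowerSeries.X * W)
      = ∑ s ∈ Finset.Icc 1 n,
          B1 s * q ^ (s * m)
            * (PowerSeries.coeff n) (PowerSeries.X ^ s * qpoly q (a * q ^ m) s * W) := by
  rw [QB.coeff_mul_range n PowerSeries.X W, Finset.mul_sum]
  have hpt : ∀ k ∈ range (n+1),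
      q ^ m * ((PowerSeries.coeff k) (PowerSeries.X : PowerSeries ℂ)
          * (PowerSeries.coeff (n - k)) W)
        = ∑ s ∈ Finset.Icc 1 n, B1 s * q ^ (s * m)
            * ((PowerSeries.coeff k) (PowerSeries.X ^ s * qpoly q (a * q ^ m) s)
                * (PowerSeries.coeff (n - k)) W) := by
    intro k hk
    rw [← mul_assoc, QB.hB1_scaled q a B1 hB1 m n k (by simp at hk; omega), Finset.sum_mul]
    apply Finset.sum_congr rfl
    intro s _
    rw [mul_assoc]
  rw [Finset.sum_congr rfl hpt, Finset.sum_comm]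
  apply Finset.sum_congr rfl
  intro s _
  rw [← Finset.mul_sum, ← QB.coeff_mul_range]

lemma QB.key1 (q x : ℂ) (m r : ℕ) :
    qpoly q x m * (qpoly q x (m + r))⁻¹ = (qpoly q (x * q ^ m) r)⁻¹ := by
  symm
  apply QB.inv_eq
  calc qpoly q (x * q ^ m) r * (qpoly q x m * (qpoly q x (m + r))⁻¹)
      = (qpoly q x m * qpoly q (x * q ^ m) r) * (qpoly q x (m + r))⁻¹ := by ring
    _ = qpoly q x (m + r) * (qpoly q x (m + r))⁻¹ := by rw [← QB.qpoly_add]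
    _ = 1 := QB.qpoly_mul_inv q x (m + r)

lemma QB.key2 (q x : ℂ) (m r t : ℕ) :
    (PowerSeries.coeff (m + t))
        ((PowerSeries.X ^ m * qpoly q x m) * (qpoly q x (m + r))⁻¹)
      = (PowerSeries.coeff t) ((qpoly q (x * q ^ m) r)⁻¹) := by
  rw [mul_assoc, QB.key1, add_comm m t, PowerSeries.coeff_X_pow_mul]

lemma QB.star (q a : ℂ) (B1 : ℕ → ℂ)
    (hB1 : ∀ N : ℕ, 1 ≤ N →
      (PowerSeries.coeff N) (PowerSeries.X : PowerSeries ℂ) =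
        ∑ n ∈ Finset.Icc 1 N,
          B1 n * (PowerSeries.coeff N) (PowerSeries.X ^ n * qpoly q a n))
    (m j : ℕ) (hj : 1 ≤ j) :
    (PowerSeries.coeff (m + j))
        ((PowerSeries.X ^ m * qpoly q a m) * (qpoly q a (m + j))⁻¹)
      = a * ∑ k ∈ range (m + j),
          B1 (m + j - k) * q ^ ((m + j - k) * k)
            * (PowerSeries.coeff k)
                ((PowerSeries.X ^ m * qpoly q a m) * (qpoly q a (k + 1))⁻¹) := by
  obtain ⟨j', rfl⟩ : ∃ j', j = j' + 1 := ⟨j - 1, by omega⟩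
  set b := a * q ^ m with hb
  -- right-hand side
  rw [Finset.sum_range_add]
  have first0 : (∑ k ∈ range m,
      B1 (m + (j'+1) - k) * q ^ ((m + (j'+1) - k) * k)
        * (PowerSeries.coeff k)
            ((PowerSeries.X ^ m * qpoly q a m) * (qpoly q a (k + 1))⁻¹)) = 0 := by
    apply Finset.sum_eq_zero
    intro k hk
    rw [mul_assoc (PowerSeries.X ^ m), QB.coeff_xpow_mul_zero _ _ _ (mem_range.mp hk), mul_zero]
  rw [first0, zero_add]
  have hsec : ∀ t ∈ range (j' + 1),
      B1 (m + (j'+1) - (m + t)) * q ^ ((m + (j'+1) - (m + t)) * (m + t))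
        * (PowerSeries.coeff (m + t))
            ((PowerSeries.X ^ m * qpoly q a m) * (qpoly q a ((m + t) + 1))⁻¹)
      = B1 (j' + 1 - t) * q ^ ((j' + 1 - t) * (m + t))
          * (b ^ t * vq q (t + 1) t) := by
    intro t ht
    have e1 : m + (j'+1) - (m + t) = j' + 1 - t := by omega
    have e2 : (m + t) + 1 = m + (t + 1) := by omega
    rw [e1, e2, QB.key2 q a m (t+1) t, ← hb, QB.coeff_inv_qpoly]
  rw [Finset.sum_congr rfl hsec]
  -- reindex to s ∈ Icc 1 (j'+1) and recognize Lemma A terms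
  have hre : (∑ t ∈ range (j' + 1),
      B1 (j' + 1 - t) * q ^ ((j' + 1 - t) * (m + t)) * (b ^ t * vq q (t + 1) t))
      = ∑ s ∈ Finset.Icc 1 (j' + 1),
          B1 s * q ^ (s * m)
            * (PowerSeries.coeff (j' + 1))
                (PowerSeries.X ^ s * qpoly q (a * q ^ m) s * (qpoly q b (j' + 2))⁻¹) := by
    apply Finset.sum_nbij' (fun t => j' + 1 - t) (fun s => j' + 1 - s)
    · intro t ht; simp only [mem_range] at ht; simp only [Finset.mem_Icc]; omega
    · intro s hs; simp only [Finset.mem_Icc] at hs; simp only [mem_range]; omega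
    · intro t ht; simp only [mem_range] at ht; omega
    · intro s hs; simp only [Finset.mem_Icc] at hs; omega
    · intro t ht
      simp only [mem_range] at ht
      set s := j' + 1 - t with hs
      have hst : s + t = j' + 1 := by omega
      have hst2 : s + (t + 1) = j' + 2 := by omega
      have hcf : (PowerSeries.coeff (j' + 1))
          (PowerSeries.X ^ s * qpoly q (a * q ^ m) s * (qpoly q b (j' + 2))⁻¹)
          = (b * q ^ s) ^ t * vq q (t + 1) t := by
        rw [← hb, ← hst, ← hst2, QB.key2 q b s (t+1) t, QB.coeff_inv_qpoly]
      rw [hcf]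
      have hexp : (s * (m + t)) = s * m + s * t := by ring
      have key : q ^ (s * (m + t)) * b ^ t = q ^ (s * m) * (b * q ^ s) ^ t := by
        rw [hexp, pow_add, hb, mul_pow (a * q ^ m) (q ^ s) t, ← pow_mul q s t]
        ring
      linear_combination (B1 s * vq q (t + 1) t) * key
  rw [hre, ← QB.lemA q a B1 hB1 m ((qpoly q b (j' + 2))⁻¹) (j' + 1)]
  -- both sides explicitly
  rw [PowerSeries.coeff_succ_X_mul, QB.coeff_inv_qpoly]
  have lhs : (PowerSeries.coeff (m + (j' + 1)))
      ((PowerSeries.X ^ m * qpoly q a m) * (qpoly q a (m + (j' + 1)))⁻¹)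
      = b ^ (j' + 1) * vq q (j' + 1) (j' + 1) := by
    rw [QB.key2 q a m (j'+1) (j'+1), ← hb, QB.coeff_inv_qpoly]
  rw [lhs, vq_symm q j' (j' + 1), hb]
  ring

/-- The `b = 0` expansion: with
`c_n = [z^n]{F/(az;q)_n} − a ∑_{k=0}^{n−1} B_{n−k,1}(a,0) q^{(n−k)k} [z^k]{F/(az;q)_{k+1}}`,
one has `F = ∑ c_n z^n (az;q)_n` coefficientwise.  Here `B_{n,1}(a,0)` are the
coefficients of the expansion `z = ∑_{n≥1} B_{n,1}(a,0) z^n (az;q)_n`. -/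
theorem q_expansion_b_zero (q a : ℂ) (F : PowerSeries ℂ)
    (B1 : ℕ → ℂ)
    (hB1 : ∀ N : ℕ, 1 ≤ N →
      (PowerSeries.coeff N) (PowerSeries.X : PowerSeries ℂ) =
        ∑ n ∈ Finset.Icc 1 N,
          B1 n * (PowerSeries.coeff N) (PowerSeries.X ^ n * qpoly q a n))
    (c : ℕ → ℂ)
    (hc0 : c 0 = (PowerSeries.coeff 0) F)
    (hc : ∀ n : ℕ, 1 ≤ n →
      c n = (PowerSeries.coeff n) (F * (qpoly q a n)⁻¹)
        - a * ∑ k ∈ Finset.range n,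
            B1 (n - k) * q ^ ((n - k) * k) *
              (PowerSeries.coeff k) (F * (qpoly q a (k + 1))⁻¹)) :
    ∀ N : ℕ,
      (PowerSeries.coeff N) F =
        ∑ n ∈ Finset.range (N + 1),
          c n * (PowerSeries.coeff N) (PowerSeries.X ^ n * qpoly q a n) := by
  intro N
  induction N using Nat.strong_induction_on with
  | _ N ih =>
  cases N with
  | zero =>
    rw [Finset.sum_range_one, pow_zero, one_mul, QB.qpoly_zero, hc0]
    simp
  | succ N' =>
    have hM_diag : (PowerSeries.coeff (N'+1))
        (PowerSeries.X ^ (N'+1) * qpoly q a (N'+1)) = 1 := by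
      have h := PowerSeries.coeff_X_pow_mul (qpoly q a (N'+1)) (N'+1) 0
      rw [zero_add] at h
      rw [h, PowerSeries.coeff_zero_eq_constantCoeff, QB.constantCoeff_qpoly]
    have hFi : ∀ i, i < N'+1 → (PowerSeries.coeff i) F
        = ∑ n ∈ Finset.range (N'+1),
            c n * (PowerSeries.coeff i) (PowerSeries.X ^ n * qpoly q a n) := by
      intro i hi
      rw [ih i hi]
      apply Finset.sum_subset
      · intro x hx
        simp only [Finset.mem_range] at hx ⊢
        omega
      · intro x hx hxn
        simp only [Finset.mem_range] at hx hxn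
        rw [QB.coeff_xpow_mul_zero _ _ _ (by omega), mul_zero]
    have hA : ∀ k, k < N' + 1 → (PowerSeries.coeff k) (F * (qpoly q a (k+1))⁻¹)
        = ∑ n ∈ Finset.range (N'+1),
            c n * (PowerSeries.coeff k)
              ((PowerSeries.X ^ n * qpoly q a n) * (qpoly q a (k+1))⁻¹) := by
      intro k hk
      rw [QB.coeff_mul_range]
      have h1 : ∀ i ∈ Finset.range (k+1),
          (PowerSeries.coeff i) F * (PowerSeries.coeff (k-i)) ((qpoly q a (k+1))⁻¹)
          = ∑ n ∈ Finset.range (N'+1),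
              c n * ((PowerSeries.coeff i) (PowerSeries.X ^ n * qpoly q a n)
                * (PowerSeries.coeff (k-i)) ((qpoly q a (k+1))⁻¹)) := by
        intro i hi
        rw [hFi i (by simp only [Finset.mem_range] at hi; omega), Finset.sum_mul]
        exact Finset.sum_congr rfl (fun n _ => mul_assoc _ _ _)
      rw [Finset.sum_congr rfl h1, Finset.sum_comm]
      apply Finset.sum_congr rfl
      intro n _
      rw [← Finset.mul_sum, ← QB.coeff_mul_range]
    have hB : (PowerSeries.coeff (N'+1)) (F * (qpoly q a (N'+1))⁻¹)
        = (PowerSeries.coeff (N'+1)) F + ∑ n ∈ Finset.range (N'+1),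
            c n * ((PowerSeries.coeff (N'+1))
                ((PowerSeries.X ^ n * qpoly q a n) * (qpoly q a (N'+1))⁻¹)
              - (PowerSeries.coeff (N'+1)) (PowerSeries.X ^ n * qpoly q a n)) := by
      have hsum : ∑ k ∈ Finset.range (N'+1),
          (PowerSeries.coeff k) F
            * (PowerSeries.coeff (N'+1-k)) ((qpoly q a (N'+1))⁻¹)
          = ∑ n ∈ Finset.range (N'+1),
              c n * ((PowerSeries.coeff (N'+1))
                  ((PowerSeries.X ^ n * qpoly q a n) * (qpoly q a (N'+1))⁻¹)
                - (PowerSeries.coeff (N'+1)) (PowerSeries.X ^ n * qpoly q a n)) := by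
        have h1 : ∀ k ∈ Finset.range (N'+1),
            (PowerSeries.coeff k) F
              * (PowerSeries.coeff (N'+1-k)) ((qpoly q a (N'+1))⁻¹)
            = ∑ n ∈ Finset.range (N'+1),
                c n * ((PowerSeries.coeff k) (PowerSeries.X ^ n * qpoly q a n)
                  * (PowerSeries.coeff (N'+1-k)) ((qpoly q a (N'+1))⁻¹)) := by
          intro k hk
          rw [hFi k (Finset.mem_range.mp hk), Finset.sum_mul]
          exact Finset.sum_congr rfl (fun n _ => mul_assoc _ _ _)
        rw [Finset.sum_congr rfl h1, Finset.sum_comm]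
        apply Finset.sum_congr rfl
        intro n _
        rw [← Finset.mul_sum]
        congr 1
        have h2 := QB.coeff_mul_range (N'+1) (PowerSeries.X ^ n * qpoly q a n)
          ((qpoly q a (N'+1))⁻¹)
        rw [Finset.sum_range_succ, Nat.sub_self, QB.coeff_inv_qpoly_zero, mul_one] at h2
        linear_combination -h2
      rw [QB.coeff_mul_range, Finset.sum_range_succ, Nat.sub_self,
        QB.coeff_inv_qpoly_zero, mul_one, hsum]
      ring
    have hC : ∑ n ∈ Finset.range (N'+1),
          c n * (PowerSeries.coeff (N'+1))
            ((PowerSeries.X ^ n * qpoly q a n) * (qpoly q a (N'+1))⁻¹)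
        = a * ∑ k ∈ Finset.range (N'+1),
            B1 (N'+1-k) * q ^ ((N'+1-k)*k)
              * (PowerSeries.coeff k) (F * (qpoly q a (k+1))⁻¹) := by
      have h1 : ∀ n ∈ Finset.range (N'+1),
          c n * (PowerSeries.coeff (N'+1))
            ((PowerSeries.X ^ n * qpoly q a n) * (qpoly q a (N'+1))⁻¹)
          = ∑ k ∈ Finset.range (N'+1),
              a * (c n * (B1 (N'+1-k) * q ^ ((N'+1-k)*k)
                * (PowerSeries.coeff k)
                    ((PowerSeries.X ^ n * qpoly q a n) * (qpoly q a (k+1))⁻¹))) := by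
        intro n hn
        have hnN : n < N'+1 := Finset.mem_range.mp hn
        obtain ⟨jj, hj1, hjeq⟩ : ∃ jj, 1 ≤ jj ∧ n + jj = N'+1 :=
          ⟨N'+1-n, by omega, by omega⟩
        rw [← hjeq, QB.star q a B1 hB1 n jj hj1, Finset.mul_sum, Finset.mul_sum]
        apply Finset.sum_congr rfl
        intro k _
        ring
      rw [Finset.sum_congr rfl h1, Finset.sum_comm, Finset.mul_sum]
      apply Finset.sum_congr rfl
      intro k hk
      rw [hA k (Finset.mem_range.mp hk), Finset.mul_sum, Finset.mul_sum]
      apply Finset.sum_congr rfl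
      intro n _
      ring
    have hsplit : ∑ n ∈ Finset.range (N'+1),
        c n * ((PowerSeries.coeff (N'+1))
            ((PowerSeries.X ^ n * qpoly q a n) * (qpoly q a (N'+1))⁻¹)
          - (PowerSeries.coeff (N'+1)) (PowerSeries.X ^ n * qpoly q a n))
        = (∑ n ∈ Finset.range (N'+1),
            c n * (PowerSeries.coeff (N'+1))
              ((PowerSeries.X ^ n * qpoly q a n) * (qpoly q a (N'+1))⁻¹))
          - ∑ n ∈ Finset.range (N'+1),
              c n * (PowerSeries.coeff (N'+1)) (PowerSeries.X ^ n * qpoly q a n) := by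
      rw [← Finset.sum_sub_distrib]
      exact Finset.sum_congr rfl (fun n _ => by ring)
    rw [Finset.sum_range_succ, hM_diag, mul_one, hc (N'+1) (by omega), hB, ← hC, hsplit]
    ring
end

section
/- Fix q, a ∈ ℂ. Let F = ∑_{n≥0} a_n z^n ∈ ℂ[[z]] and for k ≥ 0 let F_k = ∑_{i=0}^{k} a_i z^i be its k-truncation. Suppose c : ℕ → ℂ satisfies the coefficientwise expansion F/(1 − az) = ∑_{n=0}^∞ c_n z^n/(1 − a z q^n), i.e., for every N ≥ 0, [z^N]{ F · (1 − az)^{−1} } = ∑_{n=0}^{N} c_n · [z^N]{ z^n · (1 − a z q^n)^{−1} }. Then c_0 = a_0, and for every n ≥ 1: c_n = ∑_{k=0}^{n−1} g_{n−k} q^{(n−k)k} · [z^n]{ (F − F_k) · (1 − az)^{−1} }, where g : {1,2,3,...} → ℂ is defined recursively by g_m = 1 − ∑_{i=1}^{m−1} g_{m−i} q^{(m−i)i}. -/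
open PowerSeries

lemma geom_inv_coeff (b : ℂ) (N : ℕ) :
    (PowerSeries.coeff N) (1 - PowerSeries.C b * PowerSeries.X)⁻¹ = b ^ N := by
  have h : PowerSeries.constantCoeff (1 - PowerSeries.C b * PowerSeries.X) ≠ 0 := by
    simp
  have key : (1 - PowerSeries.C b * PowerSeries.X)⁻¹
      = PowerSeries.mk (fun n => b ^ n) := by
    rw [PowerSeries.inv_eq_iff_mul_eq_one h]
    ext n
    cases n with
    | zero => simp
    | succ m =>
      simp [mul_sub, mul_one, map_sub, mul_comm (PowerSeries.C b) PowerSeries.X,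
        ← mul_assoc, PowerSeries.coeff_succ_mul_X, pow_succ, mul_comm]
  rw [key, PowerSeries.coeff_mk]

lemma mul_geom_inv_coeff (a : ℂ) (G : PowerSeries ℂ) (N : ℕ) :
    (PowerSeries.coeff N) (G * (1 - PowerSeries.C a * PowerSeries.X)⁻¹)
      = ∑ j ∈ Finset.range (N + 1), (PowerSeries.coeff j) G * a ^ (N - j) := by
  rw [PowerSeries.coeff_mul, Finset.Nat.sum_antidiagonal_eq_sum_range_succ_mk]
  exact Finset.sum_congr rfl fun j _ => by rw [geom_inv_coeff]

lemma range_succ_insert (N : ℕ) : Finset.range (N + 1) = insert 0 (Finset.Icc 1 N) := by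
  ext x; simp [Finset.mem_Icc]; omega

lemma H1 (q : ℂ) (g : ℕ → ℂ)
    (hg : ∀ m : ℕ, 1 ≤ m →
      g m = 1 - ∑ i ∈ Finset.Icc 1 (m - 1), g (m - i) * q ^ ((m - i) * i))
    (M : ℕ) (hM : 1 ≤ M) :
    ∑ r ∈ Finset.Icc 1 M, g r * q ^ (r * (M - r)) = 1 := by
  obtain ⟨M', rfl⟩ : ∃ M', M = M' + 1 := ⟨M - 1, by omega⟩
  rw [Finset.sum_Icc_succ_top (by omega)]
  have h2 : ∑ r ∈ Finset.Icc 1 M', g r * q ^ (r * (M' + 1 - r))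
      = ∑ i ∈ Finset.Icc 1 (M' + 1 - 1), g (M' + 1 - i) * q ^ ((M' + 1 - i) * i) := by
    refine Finset.sum_nbij' (fun r => M' + 1 - r) (fun i => M' + 1 - i)
      ?_ ?_ ?_ ?_ ?_
    · intro x hx; simp only [Finset.mem_Icc] at hx ⊢; omega
    · intro x hx; simp only [Finset.mem_Icc] at hx ⊢; omega
    · intro x hx; simp only [Finset.mem_Icc] at hx; omega
    · intro x hx; simp only [Finset.mem_Icc] at hx; omega
    · intro x hx; simp only [Finset.mem_Icc] at hx
      have hx2 : M' + 1 - (M' + 1 - x) = x := by omega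
      rw [hx2, Nat.mul_comm]
  have h3 := hg (M' + 1) (by omega)
  rw [h2]
  simp only [Nat.sub_self, Nat.mul_zero, pow_zero, mul_one]
  linear_combination h3

lemma Pkey (q : ℂ) (g : ℕ → ℂ)
    (hH : ∀ M, 1 ≤ M → ∑ r ∈ Finset.Icc 1 M, g r * q ^ (r * (M - r)) = 1)
    (N : ℕ) :
    ∀ j, 1 ≤ j → j ≤ N →
      ∑ m ∈ Finset.Icc j N, ∑ k ∈ Finset.range j,
        g (m - k) * q ^ ((m - k) * k + m * (N - m)) = 1 := by
  intro j
  induction j with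
  | zero => omega
  | succ j ih =>
    intro _ hjN
    rcases Nat.eq_zero_or_pos j with rfl | hj
    · simpa using hH N (by omega)
    · have hIcc : Finset.Icc j N = insert j (Finset.Icc (j + 1) N) := by
        rw [Finset.Icc_add_one_left_eq_Ioc, Finset.Ioc_insert_left (by omega : j ≤ N)]
      have hrow : ∑ k ∈ Finset.range j, g (j - k) * q ^ ((j - k) * k + j * (N - j))
          = q ^ (j * (N - j)) := by
        have step : ∑ k ∈ Finset.range j, g (j - k) * q ^ ((j - k) * k + j * (N - j))
            = ∑ r ∈ Finset.Icc 1 j, g r * q ^ (r * (j - r)) * q ^ (j * (N - j)) := by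
          refine Finset.sum_nbij' (fun k => j - k) (fun r => j - r) ?_ ?_ ?_ ?_ ?_
          · intro x hx; simp only [Finset.mem_range] at hx
            simp only [Finset.mem_Icc]; omega
          · intro x hx; simp only [Finset.mem_Icc] at hx
            simp only [Finset.mem_range]; omega
          · intro x hx; simp only [Finset.mem_range] at hx; omega
          · intro x hx; simp only [Finset.mem_Icc] at hx; omega
          · intro x hx; simp only [Finset.mem_range] at hx
            have hx2 : j - (j - x) = x := by omega
            rw [hx2, pow_add, mul_assoc]
        rw [step, ← Finset.sum_mul, hH j hj, one_mul]
      have hcol : ∑ m ∈ Finset.Icc (j + 1) N, g (m - j) * q ^ ((m - j) * j + m * (N - m))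
          = q ^ (j * (N - j)) := by
        have step : ∑ m ∈ Finset.Icc (j + 1) N, g (m - j) * q ^ ((m - j) * j + m * (N - m))
            = ∑ r ∈ Finset.Icc 1 (N - j), g r * q ^ (r * ((N - j) - r)) * q ^ (j * (N - j)) := by
          refine Finset.sum_nbij' (fun m => m - j) (fun r => r + j) ?_ ?_ ?_ ?_ ?_
          · intro x hx; simp only [Finset.mem_Icc] at hx ⊢; omega
          · intro x hx; simp only [Finset.mem_Icc] at hx ⊢; omega
          · intro x hx; simp only [Finset.mem_Icc] at hx; omega
          · intro x hx; simp only [Finset.mem_Icc] at hx; omega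
          · intro x hx; simp only [Finset.mem_Icc] at hx
            have e : (x - j) * j + x * (N - x)
                = (x - j) * ((N - j) - (x - j)) + j * (N - j) := by
              zify [show j ≤ x by omega, show x ≤ N by omega, show j ≤ N by omega,
                show x - j ≤ N - j by omega]
              ring
            rw [e, pow_add, mul_assoc]
        rw [step, ← Finset.sum_mul, hH (N - j) (by omega), one_mul]
      have hIH := ih hj (by omega)
      rw [hIcc, Finset.sum_insert (by simp only [Finset.mem_Icc]; omega), hrow] at hIH
      simp_rw [Finset.sum_range_succ]
      rw [Finset.sum_add_distrib, hcol]
      linear_combination hIH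

noncomputable def cAux (q a : ℂ) (g : ℕ → ℂ) (F : PowerSeries ℂ) : ℕ → ℂ :=
  fun n => if n = 0 then (PowerSeries.coeff 0) F
    else ∑ k ∈ Finset.range n, g (n - k) * q ^ ((n - k) * k) *
      ∑ j ∈ Finset.Icc (k + 1) n, (PowerSeries.coeff j) F * a ^ (n - j)

/-- Corollary 2.9: coefficients of the expansion `F/(1−az) = ∑ c_n z^n/(1−azq^n)`
in terms of the truncations `F_k` of `F` and the recursively defined `g_m`. -/
theorem coefficients_b_eq_aq (q a : ℂ) (F : PowerSeries ℂ)
    (g : ℕ → ℂ)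
    (hg : ∀ m : ℕ, 1 ≤ m →
      g m = 1 - ∑ i ∈ Finset.Icc 1 (m - 1), g (m - i) * q ^ ((m - i) * i))
    (c : ℕ → ℂ)
    (hc : ∀ N : ℕ,
      (PowerSeries.coeff N) (F * (1 - PowerSeries.C a * PowerSeries.X)⁻¹) =
        ∑ n ∈ Finset.range (N + 1),
          c n * (PowerSeries.coeff N)
            (PowerSeries.X ^ n *
              (1 - PowerSeries.C (a * q ^ n) * PowerSeries.X)⁻¹)) :
    c 0 = (PowerSeries.coeff 0) F ∧
    ∀ n : ℕ, 1 ≤ n →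
      c n = ∑ k ∈ Finset.range n,
        g (n - k) * q ^ ((n - k) * k) *
          (PowerSeries.coeff n)
            ((F - ∑ i ∈ Finset.range (k + 1),
                PowerSeries.C ((PowerSeries.coeff i) F) * PowerSeries.X ^ i) *
              (1 - PowerSeries.C a * PowerSeries.X)⁻¹) := by
  have hH := H1 q g hg
  have hP := Pkey q g hH
  set aF : ℕ → ℂ := fun j => (PowerSeries.coeff j) F with haF
  set c' : ℕ → ℂ := cAux q a g F with hc'
  -- coefficient of truncated-tail product
  have hT : ∀ (k n : ℕ),
      (PowerSeries.coeff n) ((F - ∑ i ∈ Finset.range (k + 1),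
          PowerSeries.C ((PowerSeries.coeff i) F) * PowerSeries.X ^ i) *
        (1 - PowerSeries.C a * PowerSeries.X)⁻¹)
      = ∑ j ∈ Finset.Icc (k + 1) n, aF j * a ^ (n - j) := by
    intro k n
    rw [mul_geom_inv_coeff]
    have hco : ∀ j, (PowerSeries.coeff j) (F - ∑ i ∈ Finset.range (k + 1),
        PowerSeries.C ((PowerSeries.coeff i) F) * PowerSeries.X ^ i)
        = if j ≤ k then 0 else aF j := by
      intro j
      rw [map_sub, map_sum]
      simp_rw [PowerSeries.coeff_C_mul_X_pow]
      rw [Finset.sum_ite_eq]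
      by_cases hj : j ≤ k
      · rw [if_pos hj, if_pos (by simp [Finset.mem_range]; omega)]
        simp [haF]
      · rw [if_neg hj, if_neg (by simp [Finset.mem_range]; omega)]
        simp [haF]
    have hfil : Finset.Icc (k + 1) n = (Finset.range (n + 1)).filter (fun j => ¬ j ≤ k) := by
      ext x; simp [Finset.mem_Icc, Finset.mem_range]; omega
    rw [hfil, Finset.sum_filter]
    refine Finset.sum_congr rfl fun j _ => ?_
    rw [hco]
    by_cases hj : j ≤ k
    · rw [if_pos hj, if_neg (by exact fun h => h hj), zero_mul]
    · rw [if_neg hj, if_pos hj]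
  -- hypothesis in coefficient form
  have hc2 : ∀ N : ℕ, ∑ n ∈ Finset.range (N + 1), c n * (a * q ^ n) ^ (N - n)
      = ∑ j ∈ Finset.range (N + 1), aF j * a ^ (N - j) := by
    intro N
    have h := hc N
    rw [mul_geom_inv_coeff] at h
    have h' : ∑ n ∈ Finset.range (N + 1), c n * (a * q ^ n) ^ (N - n)
        = ∑ n ∈ Finset.range (N + 1),
            c n * (PowerSeries.coeff N)
              (PowerSeries.X ^ n *
                (1 - PowerSeries.C (a * q ^ n) * PowerSeries.X)⁻¹) := by
      refine Finset.sum_congr rfl fun n hn => ?_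
      simp only [Finset.mem_range] at hn
      rw [PowerSeries.coeff_X_pow_mul', if_pos (by omega), geom_inv_coeff]
    rw [h', ← h]
  -- the main identity for c'
  have Hmain : ∀ N : ℕ, ∑ n ∈ Finset.range (N + 1), c' n * (a * q ^ n) ^ (N - n)
      = ∑ j ∈ Finset.range (N + 1), aF j * a ^ (N - j) := by
    intro N
    rw [range_succ_insert N, Finset.sum_insert (by simp), Finset.sum_insert (by simp)]
    have hhead : c' 0 * (a * q ^ 0) ^ (N - 0) = aF 0 * a ^ (N - 0) := by
      simp [hc', cAux, haF]
    rw [hhead]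
    congr 1
    have step1 : ∀ n ∈ Finset.Icc 1 N, c' n * (a * q ^ n) ^ (N - n)
        = ∑ k ∈ Finset.range n, ∑ j ∈ Finset.Icc (k + 1) n,
            g (n - k) * q ^ ((n - k) * k + n * (N - n)) * (aF j * a ^ (N - j)) := by
      intro n hn
      simp only [Finset.mem_Icc] at hn
      rw [hc']
      show (if n = 0 then aF 0 else _) * _ = _
      rw [if_neg (by omega), Finset.sum_mul]
      refine Finset.sum_congr rfl fun k hk => ?_
      simp only [Finset.mem_range] at hk
      rw [Finset.mul_sum, Finset.sum_mul]
      refine Finset.sum_congr rfl fun j hj => ?_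
      simp only [Finset.mem_Icc] at hj
      rw [mul_pow, ← pow_mul, pow_add q]
      have e : a ^ (n - j) * a ^ (N - n) = a ^ (N - j) := by
        rw [← pow_add]; congr 1; omega
      rw [← e]; ring
    rw [Finset.sum_congr rfl step1]
    have swap1 : ∀ n ∈ Finset.Icc 1 N,
        (∑ k ∈ Finset.range n, ∑ j ∈ Finset.Icc (k + 1) n,
          g (n - k) * q ^ ((n - k) * k + n * (N - n)) * (aF j * a ^ (N - j)))
        = ∑ j ∈ Finset.Icc 1 n, ∑ k ∈ Finset.range j,
          g (n - k) * q ^ ((n - k) * k + n * (N - n)) * (aF j * a ^ (N - j)) := by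
      intro n hn
      refine Finset.sum_comm' ?_
      intro k j
      simp only [Finset.mem_Icc, Finset.mem_range]
      omega
    rw [Finset.sum_congr rfl swap1]
    rw [Finset.sum_comm' (t' := Finset.Icc 1 N) (s' := fun j => Finset.Icc j N)
      (by intro n j; simp only [Finset.mem_Icc]; omega)]
    refine Finset.sum_congr rfl fun j hj => ?_
    simp only [Finset.mem_Icc] at hj
    calc ∑ n ∈ Finset.Icc j N, ∑ k ∈ Finset.range j,
          g (n - k) * q ^ ((n - k) * k + n * (N - n)) * (aF j * a ^ (N - j))
        = (∑ n ∈ Finset.Icc j N, ∑ k ∈ Finset.range j,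
            g (n - k) * q ^ ((n - k) * k + n * (N - n))) * (aF j * a ^ (N - j)) := by
          rw [Finset.sum_mul]
          exact Finset.sum_congr rfl fun n _ => by rw [Finset.sum_mul]
      _ = aF j * a ^ (N - j) := by rw [hP N j hj.1 hj.2, one_mul]
  -- uniqueness: c = c'
  have kq : ∀ n, c n = c' n := by
    intro n
    induction n using Nat.strong_induction_on with
    | _ n ih =>
      have h1 := hc2 n
      have h2 := Hmain n
      rw [Finset.sum_range_succ] at h1 h2
      simp only [Nat.sub_self, pow_zero, mul_one] at h1 h2
      have h3 : ∑ m ∈ Finset.range n, c m * (a * q ^ m) ^ (n - m)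
          = ∑ m ∈ Finset.range n, c' m * (a * q ^ m) ^ (n - m) :=
        Finset.sum_congr rfl fun m hm => by rw [ih m (Finset.mem_range.mp hm)]
      linear_combination h1 - h2 - h3
  constructor
  · rw [kq 0]; simp [hc', cAux, haF]
  · intro n hn
    rw [kq n, hc']
    show (if n = 0 then aF 0 else _) = _
    rw [if_neg (by omega)]
    exact Finset.sum_congr rfl fun k _ => by rw [hT k n]
end

section
/- Let q ∈ ℂ with |q| < 1, let a, b, z ∈ ℂ with b ≠ 0 and b z q^m ≠ 1 for every integer m ≥ 0, and let t : ℕ → ℂ be such that ∑_{n=0}^∞ |t_n| r^n < ∞ for every r > 0. Set G(w) = ∑_{n=0}^∞ t_n w^n and, for parameters (α, β), set G̃(w; α, β) = ∑_{n=0}^∞ t_n w^n (αw;q)_n/(βw;q)_n. Then ( (az;q)_∞ / (bz;q)_∞ ) · G(z) = ∑_{n=0}^∞ [ (aq/b;q)_n (az;q)_n / ((q;q)_n (bz;q)_n) ] · (bz)^n q^{n(n−1)} · ( G̃(z q^n; a, b) − a z q^{2n} · G̃(z q^{n+1}; a/q, b/q) ), all series involved being absolutely convergent. -/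
set_option maxHeartbeats 1000000

/-- The finite q-Pochhammer symbol `(x;q)_n = ∏_{i=0}^{n-1} (1 - x q^i)`. -/
noncomputable def qPoch (q x : ℂ) (n : ℕ) : ℂ :=
  ∏ i ∈ Finset.range n, (1 - x * q ^ i)

/-- `G̃(w; α, β) = ∑_{n≥0} t_n w^n (αw;q)_n/(βw;q)_n`. -/
noncomputable def Gtilde (q : ℂ) (t : ℕ → ℂ) (w α β : ℂ) : ℂ :=
  ∑' n : ℕ, t n * w ^ n * qPoch q (α * w) n / qPoch q (β * w) n


namespace GTaux

open Finset Filter Topology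

lemma qPoch_zero (q x : ℂ) : qPoch q x 0 = 1 := by simp [qPoch]

lemma qPoch_succ (q x : ℂ) (n : ℕ) : qPoch q x (n+1) = qPoch q x n * (1 - x * q ^ n) :=
  Finset.prod_range_succ _ _

lemma qPoch_succ' (q x : ℂ) (n : ℕ) : qPoch q x (n+1) = (1 - x) * qPoch q (x*q) n := by
  rw [qPoch, Finset.prod_range_succ']
  simp only [pow_zero, mul_one]
  rw [mul_comm]
  congr 1
  exact Finset.prod_congr rfl fun i _ => by ring

lemma qPoch_add (q x : ℂ) (m n : ℕ) :
    qPoch q x (m + n) = qPoch q x m * qPoch q (x * q ^ m) n := by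
  rw [qPoch, Finset.prod_range_add]
  congr 1
  exact Finset.prod_congr rfl fun i _ => by rw [pow_add]; ring

lemma qPoch_of_zero (q : ℂ) (n : ℕ) : qPoch q 0 n = 1 := by simp [qPoch]

lemma qPoch_ne_zero {q x : ℂ} (h : ∀ i : ℕ, x * q ^ i ≠ 1) (n : ℕ) : qPoch q x n ≠ 0 :=
  Finset.prod_ne_zero_iff.mpr fun i _ => sub_ne_zero.mpr (Ne.symm (h i))

lemma geom_sum_le_inv {r : ℝ} (h0 : 0 ≤ r) (h1 : r < 1) (n : ℕ) :
    ∑ i ∈ Finset.range n, r ^ i ≤ (1 - r)⁻¹ := by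
  rw [geom_sum_eq (by linarith : r ≠ 1)]
  have h2 : 0 < 1 - r := by linarith
  have h3 : (r ^ n - 1) / (r - 1) = (1 - r ^ n) / (1 - r) := by
    rw [div_eq_div_iff (by linarith) (by linarith)]; ring
  rw [h3, div_le_iff₀ h2]
  have : 0 ≤ r ^ n := pow_nonneg h0 n
  have h4 : (1 - r)⁻¹ * (1 - r) = 1 := inv_mul_cancel₀ (by linarith)
  linarith

lemma norm_prod_one_add_le (f : ℕ → ℂ) (v : Finset ℕ) :
    ‖∏ i ∈ v, (1 + f i)‖ ≤ Real.exp (∑ i ∈ v, ‖f i‖) := by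
  calc ‖∏ i ∈ v, (1 + f i)‖ ≤ ∏ i ∈ v, ‖1 + f i‖ := Finset.norm_prod_le _ _
    _ ≤ ∏ i ∈ v, Real.exp ‖f i‖ := by
        apply Finset.prod_le_prod (fun i _ => norm_nonneg _)
        intro i _
        calc ‖1 + f i‖ ≤ ‖(1:ℂ)‖ + ‖f i‖ := norm_add_le _ _
          _ = ‖f i‖ + 1 := by rw [norm_one]; ring
          _ ≤ Real.exp ‖f i‖ := Real.add_one_le_exp _
    _ = Real.exp (∑ i ∈ v, ‖f i‖) := (Real.exp_sum _ _).symm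

lemma norm_prod_one_add_sub_one_le (f : ℕ → ℂ) (v : Finset ℕ) :
    ‖(∏ i ∈ v, (1 + f i)) - 1‖ ≤ Real.exp (∑ i ∈ v, ‖f i‖) - 1 := by
  induction v using Finset.cons_induction with
  | empty => simp
  | cons a v ha ih =>
    rw [Finset.prod_cons, Finset.sum_cons]
    have hv := norm_prod_one_add_le f v
    have key : (1 + f a) * (∏ i ∈ v, (1 + f i)) - 1
        = ((∏ i ∈ v, (1 + f i)) - 1) + f a * (∏ i ∈ v, (1 + f i)) := by ring
    rw [key]
    calc ‖((∏ i ∈ v, (1 + f i)) - 1) + f a * (∏ i ∈ v, (1 + f i))‖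
        ≤ ‖(∏ i ∈ v, (1 + f i)) - 1‖ + ‖f a‖ * ‖∏ i ∈ v, (1 + f i)‖ := by
          refine le_trans (norm_add_le _ _) ?_
          rw [norm_mul]
      _ ≤ (Real.exp (∑ i ∈ v, ‖f i‖) - 1) + ‖f a‖ * Real.exp (∑ i ∈ v, ‖f i‖) := by
          have := mul_le_mul_of_nonneg_left hv (norm_nonneg (f a))
          linarith [ih]
      _ ≤ Real.exp (‖f a‖ + ∑ i ∈ v, ‖f i‖) - 1 := by
          rw [Real.exp_add]
          nlinarith [Real.add_one_le_exp ‖f a‖, Real.exp_pos (∑ i ∈ v, ‖f i‖)]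

lemma norm_qPoch_le {q : ℂ} (hq : ‖q‖ < 1) (x : ℂ) (n : ℕ) :
    ‖qPoch q x n‖ ≤ Real.exp (‖x‖ * (1 - ‖q‖)⁻¹) := by
  have h0 : (0:ℝ) ≤ ‖q‖ := norm_nonneg q
  have h1 := norm_prod_one_add_le (fun i => -(x*q^i)) (Finset.range n)
  simp only [← sub_eq_add_neg] at h1
  refine le_trans (le_of_eq (by rw [qPoch]) : ‖qPoch q x n‖ ≤ _) (le_trans h1 ?_)
  rw [Real.exp_le_exp]
  calc ∑ i ∈ range n, ‖-(x*q^i)‖ = ∑ i ∈ range n, ‖x‖*‖q‖^i := by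
        apply Finset.sum_congr rfl
        intro i _
        rw [norm_neg, norm_mul, norm_pow]
    _ = ‖x‖ * ∑ i ∈ range n, ‖q‖^i := by rw [Finset.mul_sum]
    _ ≤ ‖x‖ * (1-‖q‖)⁻¹ := mul_le_mul_of_nonneg_left (geom_sum_le_inv h0 hq n) (norm_nonneg x)


lemma multipliable_one_add {f : ℕ → ℂ} (hf : Summable fun i => ‖f i‖) :
    Multipliable (fun i => 1 + f i) := by
  classical
  set T := ∑' i, ‖f i‖ with hT
  have hT0 : ∀ N : ℕ, ∑ i ∈ range N, ‖f i‖ ≤ T :=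
    fun N => Summable.sum_le_tsum _ (fun i _ => norm_nonneg _) hf
  have htail : Tendsto (fun N : ℕ => T - ∑ i ∈ range N, ‖f i‖) atTop (𝓝 0) := by
    have h1 := hf.hasSum.tendsto_sum_nat
    have h2 := h1.const_sub T
    rw [← hT] at h2
    simpa using h2
  have hbig : ∀ (N : ℕ) (v : Finset ℕ), (∀ i ∈ v, N ≤ i) →
      ∑ i ∈ v, ‖f i‖ ≤ T - ∑ i ∈ range N, ‖f i‖ := by
    intro N v hv
    obtain ⟨M, hM⟩ := v.exists_nat_subset_range
    have hsub : v ⊆ range (max M N) \ range N := by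
      intro i hi
      simp only [Finset.mem_sdiff, mem_range, not_lt]
      have := hM hi
      simp only [mem_range] at this
      exact ⟨lt_of_lt_of_le this (le_max_left _ _), hv i hi⟩
    calc ∑ i ∈ v, ‖f i‖ ≤ ∑ i ∈ range (max M N) \ range N, ‖f i‖ :=
          Finset.sum_le_sum_of_subset_of_nonneg hsub (fun i _ _ => norm_nonneg _)
      _ = ∑ i ∈ range (max M N), ‖f i‖ - ∑ i ∈ range N, ‖f i‖ :=
          Finset.sum_sdiff_eq_sub (Finset.range_subset_range.mpr (le_max_right _ _))
      _ ≤ T - ∑ i ∈ range N, ‖f i‖ := by linarith [hT0 (max M N)]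
  have hC : ∀ (N : ℕ) (v : Finset ℕ), (∀ i ∈ v, N ≤ i) →
      ‖(∏ i ∈ v, (1 + f i)) - 1‖ ≤ Real.exp (T - ∑ i ∈ range N, ‖f i‖) - 1 := by
    intro N v hv
    refine le_trans (norm_prod_one_add_sub_one_le f v) ?_
    exact sub_le_sub_right (Real.exp_le_exp.mpr (hbig N v hv)) 1
  set u : ℕ → ℂ := fun N => ∏ i ∈ range N, (1 + f i) with hu
  have hub : ∀ N, ‖u N‖ ≤ Real.exp T :=
    fun N => le_trans (norm_prod_one_add_le f _) (Real.exp_le_exp.mpr (hT0 N))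
  have hδ : ∀ ε : ℝ, 0 < ε → ∃ N : ℕ, Real.exp T * (Real.exp (T - ∑ i ∈ range N, ‖f i‖) - 1) < ε := by
    intro ε hε
    have hcont : Tendsto (fun N : ℕ => Real.exp T * (Real.exp (T - ∑ i ∈ range N, ‖f i‖) - 1))
        atTop (𝓝 (Real.exp T * (Real.exp 0 - 1))) := by
      apply Tendsto.const_mul
      exact (Real.continuous_exp.continuousAt.tendsto.comp htail).sub_const 1
    rw [Real.exp_zero] at hcont
    simp only [sub_self, mul_zero] at hcont
    exact (hcont.eventually (gt_mem_nhds hε)).exists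
  have hkey : ∀ (N : ℕ) (v : Finset ℕ), range N ⊆ v →
      ‖(∏ i ∈ v, (1 + f i)) - u N‖ ≤ Real.exp T * (Real.exp (T - ∑ i ∈ range N, ‖f i‖) - 1) := by
    intro N v hNv
    have hsplit : ∏ i ∈ v, (1 + f i) = u N * ∏ i ∈ v \ range N, (1 + f i) := by
      rw [mul_comm, hu]
      exact (Finset.prod_sdiff hNv).symm
    have h2 : (∏ i ∈ v, (1 + f i)) - u N = u N * ((∏ i ∈ v \ range N, (1 + f i)) - 1) := by
      rw [hsplit]; ring
    rw [h2, norm_mul]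
    have hge : ∀ i ∈ v \ range N, N ≤ i := by
      intro i hi
      simp only [Finset.mem_sdiff, mem_range, not_lt] at hi
      exact hi.2
    have hexp1 : (0:ℝ) ≤ Real.exp (T - ∑ i ∈ range N, ‖f i‖) - 1 := by
      have : (0:ℝ) ≤ T - ∑ i ∈ range N, ‖f i‖ := by linarith [hT0 N]
      have := Real.one_le_exp this
      linarith
    exact mul_le_mul (hub N) (hC N _ hge) (norm_nonneg _) (Real.exp_pos T).le
  have hcauchy : CauchySeq u := by
    rw [Metric.cauchySeq_iff']
    intro ε hε
    obtain ⟨N, hN⟩ := hδ ε hε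
    refine ⟨N, fun n hn => ?_⟩
    rw [dist_eq_norm]
    exact lt_of_le_of_lt (hkey N (range n) (Finset.range_subset_range.mpr hn)) hN
  obtain ⟨P, hP⟩ := cauchySeq_tendsto_of_complete hcauchy
  refine ⟨P, ?_⟩
  rw [HasProd, SummationFilter.unconditional_filter, Metric.tendsto_atTop]
  intro ε hε
  obtain ⟨N1, hN1⟩ := hδ (ε/2) (by linarith)
  have h2 := (Metric.tendsto_atTop.mp hP) (ε/2) (by linarith)
  obtain ⟨N2, hN2⟩ := h2
  set N := max N1 N2 with hN
  refine ⟨range N, fun s hs => ?_⟩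
  have hd1 : dist (∏ i ∈ s, (1 + f i)) (u N) ≤ Real.exp T * (Real.exp (T - ∑ i ∈ range N, ‖f i‖) - 1) := by
    rw [dist_eq_norm]
    exact hkey N s hs
  have hmono : Real.exp T * (Real.exp (T - ∑ i ∈ range N, ‖f i‖) - 1)
      ≤ Real.exp T * (Real.exp (T - ∑ i ∈ range N1, ‖f i‖) - 1) := by
    have : ∑ i ∈ range N1, ‖f i‖ ≤ ∑ i ∈ range N, ‖f i‖ :=
      Finset.sum_le_sum_of_subset_of_nonneg (Finset.range_subset_range.mpr (le_max_left _ _))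
        (fun i _ _ => norm_nonneg _)
    have := Real.exp_le_exp.mpr (by linarith : T - ∑ i ∈ range N, ‖f i‖ ≤ T - ∑ i ∈ range N1, ‖f i‖)
    nlinarith [Real.exp_pos T]
  calc dist (∏ i ∈ s, (1 + f i)) P ≤ dist (∏ i ∈ s, (1 + f i)) (u N) + dist (u N) P :=
        dist_triangle _ _ _
    _ < ε/2 + ε/2 := by
        have := hN2 N (le_max_right _ _)
        have h3 := lt_of_le_of_lt (le_trans hd1 hmono) hN1
        exact add_lt_add h3 this
    _ = ε := by ring

lemma multipliable_one_sub {q : ℂ} (hq : ‖q‖ < 1) (x : ℂ) :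
    Multipliable (fun i : ℕ => 1 - x * q ^ i) := by
  have hs : Summable (fun i : ℕ => ‖-(x * q ^ i)‖) := by
    have : Summable (fun i : ℕ => ‖x‖ * ‖q‖ ^ i) :=
      (summable_geometric_of_lt_one (norm_nonneg q) hq).mul_left ‖x‖
    apply this.congr
    intro i
    rw [norm_neg, norm_mul, norm_pow]
  exact (multipliable_one_add hs).congr (fun i => by ring)


lemma exp_neg_two_le {c : ℝ} (h0 : 0 ≤ c) (h1 : c ≤ 1/2) : Real.exp (-(2*c)) ≤ 1 - c := by
  have key : 1 ≤ (1-c) * Real.exp (2*c) := by nlinarith [Real.add_one_le_exp (2*c)]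
  have h3 : Real.exp (-(2*c)) * Real.exp (2*c) = 1 := by
    rw [← Real.exp_add]; norm_num
  nlinarith [Real.exp_pos (2*c)]

lemma exists_pow_small (x : ℝ) {r : ℝ} (h0 : 0 ≤ r) (h1 : r < 1) :
    ∃ M : ℕ, ∀ m ≥ M, x * r ^ m ≤ 1/2 := by
  have ht : Tendsto (fun m : ℕ => x * r ^ m) atTop (𝓝 0) := by
    simpa using (tendsto_pow_atTop_nhds_zero_of_lt_one h0 h1).const_mul x
  have := ht.eventually (eventually_le_nhds (by norm_num : (0:ℝ) < 1/2))
  exact eventually_atTop.mp this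

lemma exists_qPoch_lower {q : ℂ} (hq : ‖q‖ < 1) (x : ℂ) (hx : ∀ m : ℕ, x * q ^ m ≠ 1) :
    ∃ ε : ℝ, 0 < ε ∧ ε ≤ 1 ∧ ∀ S : Finset ℕ, ε ≤ ∏ m ∈ S, ‖1 - x * q ^ m‖ := by
  classical
  have h0 : (0:ℝ) ≤ ‖q‖ := norm_nonneg q
  obtain ⟨M, hM⟩ := exists_pow_small ‖x‖ h0 hq
  set δ : ℕ → ℝ := fun m => min ‖1 - x * q ^ m‖ 1 with hδdef
  have hδpos : ∀ m, 0 < δ m := fun m =>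
    lt_min (norm_pos_iff.mpr (sub_ne_zero.mpr (Ne.symm (hx m)))) one_pos
  have hδ1 : ∀ m, δ m ≤ 1 := fun m => min_le_right _ _
  refine ⟨(∏ m ∈ range M, δ m) * Real.exp (-(2 * (‖x‖ * (1 - ‖q‖)⁻¹))), ?_, ?_, ?_⟩
  · exact mul_pos (Finset.prod_pos fun m _ => hδpos m) (Real.exp_pos _)
  · have h1 : ∏ m ∈ range M, δ m ≤ 1 :=
      Finset.prod_le_one (fun m _ => (hδpos m).le) (fun m _ => hδ1 m)
    have h2 : Real.exp (-(2 * (‖x‖ * (1 - ‖q‖)⁻¹))) ≤ 1 := by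
      have hq' : (0:ℝ) < 1 - ‖q‖ := by linarith
      have hxx : (0:ℝ) ≤ ‖x‖ * (1 - ‖q‖)⁻¹ :=
        mul_nonneg (norm_nonneg x) (inv_nonneg.mpr hq'.le)
      calc Real.exp (-(2 * (‖x‖ * (1 - ‖q‖)⁻¹))) ≤ Real.exp 0 :=
            Real.exp_le_exp.mpr (by linarith)
        _ = 1 := Real.exp_zero
    have := mul_le_mul h1 h2 (Real.exp_pos _).le zero_le_one
    linarith
  · intro S
    rw [← Finset.prod_filter_mul_prod_filter_not S (· < M) (fun m => ‖1 - x * q ^ m‖)]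
    apply mul_le_mul
    · -- ∏_{range M} δ ≤ ∏ over S.filter (<M)
      have hsub2 : S.filter (· < M) ⊆ range M := by
        intro m hm
        simp only [Finset.mem_filter] at hm
        exact Finset.mem_range.mpr hm.2
      calc ∏ m ∈ range M, δ m
          = (∏ m ∈ range M \ S.filter (· < M), δ m) * ∏ m ∈ S.filter (· < M), δ m :=
            (Finset.prod_sdiff hsub2).symm
        _ ≤ 1 * ∏ m ∈ S.filter (· < M), δ m := by
            apply mul_le_mul_of_nonneg_right
            · exact Finset.prod_le_one (fun m _ => (hδpos m).le) (fun m _ => hδ1 m)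
            · exact Finset.prod_nonneg fun m _ => (hδpos m).le
        _ = ∏ m ∈ S.filter (· < M), δ m := one_mul _
        _ ≤ ∏ m ∈ S.filter (· < M), ‖1 - x * q ^ m‖ :=
            Finset.prod_le_prod (fun m _ => (hδpos m).le) (fun m _ => min_le_left _ _)
    · -- exp part
      set S2 := S.filter (fun m => ¬ m < M) with hS2def
      have hS2 : ∀ m ∈ S2, M ≤ m := by
        intro m hm
        simp only [hS2def, Finset.mem_filter, not_lt] at hm
        exact hm.2
      calc Real.exp (-(2 * (‖x‖ * (1 - ‖q‖)⁻¹)))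
          ≤ Real.exp (∑ m ∈ S2, -(2 * (‖x‖ * ‖q‖ ^ m))) := by
            rw [Real.exp_le_exp]
            have hsum : ∑ m ∈ S2, ‖x‖ * ‖q‖ ^ m ≤ ‖x‖ * (1 - ‖q‖)⁻¹ := by
              obtain ⟨L, hL⟩ := S2.exists_nat_subset_range
              calc ∑ m ∈ S2, ‖x‖ * ‖q‖ ^ m ≤ ∑ m ∈ range L, ‖x‖ * ‖q‖ ^ m :=
                    Finset.sum_le_sum_of_subset_of_nonneg hL (fun m _ _ => by positivity)
                _ = ‖x‖ * ∑ m ∈ range L, ‖q‖ ^ m := by rw [Finset.mul_sum]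
                _ ≤ ‖x‖ * (1 - ‖q‖)⁻¹ :=
                    mul_le_mul_of_nonneg_left (geom_sum_le_inv h0 hq L) (norm_nonneg x)
            have h2 : ∑ m ∈ S2, -(2 * (‖x‖ * ‖q‖ ^ m)) = -(2 * ∑ m ∈ S2, ‖x‖ * ‖q‖ ^ m) := by
              rw [Finset.mul_sum, ← Finset.sum_neg_distrib]
            rw [h2]
            linarith
        _ = ∏ m ∈ S2, Real.exp (-(2 * (‖x‖ * ‖q‖ ^ m))) := Real.exp_sum _ _
        _ ≤ ∏ m ∈ S2, ‖1 - x * q ^ m‖ := by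
            apply Finset.prod_le_prod (fun m _ => (Real.exp_pos _).le)
            intro m hm
            have hc : ‖x‖ * ‖q‖ ^ m ≤ 1/2 := hM m (hS2 m hm)
            have hnorm : 1 - ‖x * q ^ m‖ ≤ ‖1 - x * q ^ m‖ := by
              have := norm_sub_norm_le (1 : ℂ) (x * q ^ m)
              simpa using this
            have hxq : ‖x * q ^ m‖ = ‖x‖ * ‖q‖ ^ m := by rw [norm_mul, norm_pow]
            calc Real.exp (-(2 * (‖x‖ * ‖q‖ ^ m))) ≤ 1 - ‖x‖ * ‖q‖ ^ m :=
                  exp_neg_two_le (by positivity) hc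
              _ ≤ ‖1 - x * q ^ m‖ := by rw [hxq] at hnorm; linarith
    · exact (Real.exp_pos _).le
    · exact Finset.prod_nonneg fun m _ => norm_nonneg _

lemma qPoch_lower {q x : ℂ} {ε : ℝ}
    (hS : ∀ S : Finset ℕ, ε ≤ ∏ m ∈ S, ‖1 - x * q ^ m‖) (n k : ℕ) :
    ε ≤ ‖qPoch q (x * q ^ n) k‖ := by
  classical
  have h1 : ‖qPoch q (x * q ^ n) k‖ = ∏ i ∈ range k, ‖1 - x * q ^ (n + i)‖ := by
    rw [qPoch, norm_prod]
    exact Finset.prod_congr rfl fun i _ => by rw [pow_add]; ring_nf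
  have h2 : ∏ i ∈ range k, ‖1 - x * q ^ (n + i)‖
      = ∏ m ∈ (range k).image (n + ·), ‖1 - x * q ^ m‖ := by
    rw [Finset.prod_image]
    intro i _ j _ hij
    beta_reduce at hij
    omega
  rw [h1, h2]
  exact hS _

lemma qPoch_lower₀ {q x : ℂ} {ε : ℝ}
    (hS : ∀ S : Finset ℕ, ε ≤ ∏ m ∈ S, ‖1 - x * q ^ m‖) (k : ℕ) :
    ε ≤ ‖qPoch q x k‖ := by
  have := qPoch_lower hS 0 k
  simpa using this

lemma summable_pow_mul {qn : ℝ} (h0 : 0 ≤ qn) (h1 : qn < 1) {R : ℝ} (hR : 0 ≤ R) :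
    Summable (fun n : ℕ => R ^ n * qn ^ (n * (n - 1))) := by
  obtain ⟨M, hM⟩ := exists_pow_small R h0 h1
  rw [← summable_nat_add_iff (M + 1)]
  have hgeo : Summable (fun n : ℕ => (1/2 : ℝ) ^ (n + (M + 1))) := by
    rw [summable_nat_add_iff (M + 1)]
    exact summable_geometric_of_lt_one (by norm_num) (by norm_num)
  apply Summable.of_nonneg_of_le (fun n => by positivity) (fun n => ?_) hgeo
  have he : (n + (M + 1)) - 1 = n + M := by omega
  rw [he, Nat.mul_comm, pow_mul, ← mul_pow]
  apply pow_le_pow_left₀ (by positivity)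
  exact hM (n + M) (by omega)

lemma qPoch_one (q : ℂ) (n : ℕ) : qPoch q 1 (n+1) = 0 := by
  rw [qPoch_succ']; simp

/-- term of the key series -/
noncomputable def tt (q c A B : ℂ) (n : ℕ) : ℂ :=
  qPoch q c n * qPoch q A n * B^n * q^(n*(n-1)) * (1 - A*q^(2*n)) /
    (qPoch q q n * qPoch q B n)

/-- telescoping helper -/
noncomputable def vv (q c A B : ℂ) (n : ℕ) : ℂ :=
  (1 - B) * qPoch q c n * qPoch q A n * B^n * q^(n*(n-1)) * (1 - q^n) /
    (qPoch q q n * qPoch q B n)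

lemma vv_zero (q c A B : ℂ) : vv q c A B 0 = 0 := by
  simp [vv]

lemma step_algebra (q c A B : ℂ) (n : ℕ) (hrel : c * B = A * q)
    (hPq : qPoch q q n ≠ 0) (hPB : qPoch q B n ≠ 0)
    (h1B : (1:ℂ) - B ≠ 0) (h1Bq : (1:ℂ) - B * q ^ n ≠ 0) (h1q : (1:ℂ) - q * q ^ n ≠ 0) :
    (1 - B) * tt q c A B n - (1 - A) * tt q c (A*q) (B*q) n
      = vv q c A B n - vv q c A B (n+1) := by
  have hpow : q^((n+1)*((n+1)-1)) = q^(n*(n-1)) * q^(2*n) := by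
    rw [← pow_add]
    congr 1
    rcases n with _ | m
    · simp
    · simp only [Nat.add_sub_cancel]
      ring
  have rA : qPoch q A n * (1 - A*q^n) = (1 - A) * qPoch q (A*q) n := by
    rw [← qPoch_succ, qPoch_succ']
  have rB : qPoch q B n * (1 - B*q^n) = (1 - B) * qPoch q (B*q) n := by
    rw [← qPoch_succ, qPoch_succ']
  rw [tt, tt, vv, vv, hpow,
      qPoch_succ q c n, qPoch_succ q A n, qPoch_succ q B n, qPoch_succ q q n]
  by_cases hB0 : B = 0
  · subst hB0
    have hAq : A * q = 0 := by rw [← hrel]; ring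
    rcases n with _ | m
    · simp only [pow_zero, mul_one, qPoch_zero, Nat.zero_eq, Nat.mul_zero, Nat.zero_mul,
        mul_zero, zero_pow, one_mul, mul_one]
      simp [qPoch_zero, hAq]
    · simp [zero_pow, qPoch_zero]
  · have eB : qPoch q (B*q) n = qPoch q B n * (1 - B*q^n) / (1 - B) := by
      rw [eq_div_iff h1B]
      linear_combination -rB
    by_cases h1A : (1:ℂ) - A = 0
    · have hA1 : A = 1 := by linear_combination -h1A
      subst hA1
      rcases n with _ | m
      · simp [qPoch_zero]
      · have hz : qPoch q 1 (m+1) = 0 := qPoch_one q m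
        rw [hz]
        simp
    · have eA : qPoch q (A*q) n = qPoch q A n * (1 - A*q^n) / (1 - A) := by
        rw [eq_div_iff h1A]
        linear_combination -rA
      have hD : qPoch q q n * qPoch q B n * (1 - B*q^n) ≠ 0 :=
        mul_ne_zero (mul_ne_zero hPq hPB) h1Bq
      have hT1 : (1 - B) * (qPoch q c n * qPoch q A n * B ^ n * q ^ (n * (n - 1)) *
            (1 - A * q ^ (2 * n)) / (qPoch q q n * qPoch q B n))
          = ((1-B) * qPoch q c n * qPoch q A n * B^n * q^(n*(n-1)) * (1 - A*q^(2*n)) * (1 - B*q^n))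
            / (qPoch q q n * qPoch q B n * (1 - B*q^n)) := by
        rw [← mul_div_assoc, div_eq_div_iff (mul_ne_zero hPq hPB) hD]
        ring
      have hT2 : (1 - A) * (qPoch q c n * qPoch q (A * q) n * (B * q) ^ n * q ^ (n * (n - 1)) *
            (1 - A * q * q ^ (2 * n)) / (qPoch q q n * qPoch q (B * q) n))
          = (qPoch q c n * qPoch q A n * (1 - A*q^n) * B^n * q^n * q^(n*(n-1)) *
              (1 - A*q*q^(2*n)) * (1-B))
            / (qPoch q q n * qPoch q B n * (1 - B*q^n)) := by
        rw [eA, eB]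
        field_simp
        ring
      have hT3 : (1 - B) * qPoch q c n * qPoch q A n * B ^ n * q ^ (n * (n - 1)) * (1 - q ^ n) /
            (qPoch q q n * qPoch q B n)
          = ((1-B) * qPoch q c n * qPoch q A n * B^n * q^(n*(n-1)) * (1 - q^n) * (1 - B*q^n))
            / (qPoch q q n * qPoch q B n * (1 - B*q^n)) := by
        rw [div_eq_div_iff (mul_ne_zero hPq hPB) hD]
        ring
      have hT4 : (1 - B) * (qPoch q c n * (1 - c * q ^ n)) * (qPoch q A n * (1 - A * q ^ n)) *
            B ^ (n + 1) * (q ^ (n * (n - 1)) * q ^ (2 * n)) * (1 - q ^ (n + 1)) /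
            (qPoch q q n * (1 - q * q ^ n) * (qPoch q B n * (1 - B * q ^ n)))
          = ((1-B) * qPoch q c n * (1 - c*q^n) * qPoch q A n * (1 - A*q^n) * B^(n+1) *
              q^(n*(n-1)) * q^(2*n))
            / (qPoch q q n * qPoch q B n * (1 - B*q^n)) := by
        rw [div_eq_div_iff (by
          exact mul_ne_zero (mul_ne_zero hPq h1q) (mul_ne_zero hPB h1Bq)) hD]
        have hq1 : (1:ℂ) - q^(n+1) = 1 - q*q^n := by rw [pow_succ]; ring
        rw [hq1]
        ring
      rw [hT1, hT2, hT3, hT4, div_sub_div_same, div_sub_div_same]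
      have hN : (1-B) * qPoch q c n * qPoch q A n * B^n * q^(n*(n-1)) * (1 - A*q^(2*n)) * (1 - B*q^n)
            - qPoch q c n * qPoch q A n * (1 - A*q^n) * B^n * q^n * q^(n*(n-1)) *
              (1 - A*q*q^(2*n)) * (1-B)
          = (1-B) * qPoch q c n * qPoch q A n * B^n * q^(n*(n-1)) * (1 - q^n) * (1 - B*q^n)
            - (1-B) * qPoch q c n * (1 - c*q^n) * qPoch q A n * (1 - A*q^n) * B^(n+1) *
              q^(n*(n-1)) * q^(2*n) := by
        linear_combination (-(qPoch q c n * qPoch q A n * q^(n*(n-1)) * B^n) * (1-B) *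
          q^(3*n) * (1 - A*q^n)) * hrel
      rw [hN]

lemma tt_zero (q c A B : ℂ) : tt q c A B 0 = 1 - A := by simp [tt, qPoch]

lemma step_sum (q c A B : ℂ) (hrel : c * B = A * q)
    (hPq : ∀ n, qPoch q q n ≠ 0) (hPB : ∀ n, qPoch q B n ≠ 0)
    (h1B : (1:ℂ) - B ≠ 0) (h1Bq : ∀ n : ℕ, (1:ℂ) - B * q ^ n ≠ 0)
    (h1q : ∀ n : ℕ, (1:ℂ) - q * q ^ n ≠ 0) (N : ℕ) :
    (1 - B) * ∑ n ∈ range N, tt q c A B n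
      - (1 - A) * ∑ n ∈ range N, tt q c (A*q) (B*q) n = - vv q c A B N := by
  calc (1 - B) * ∑ n ∈ range N, tt q c A B n
        - (1 - A) * ∑ n ∈ range N, tt q c (A*q) (B*q) n
      = ∑ n ∈ range N, ((1 - B) * tt q c A B n - (1 - A) * tt q c (A*q) (B*q) n) := by
        rw [Finset.mul_sum, Finset.mul_sum, ← Finset.sum_sub_distrib]
    _ = ∑ n ∈ range N, (vv q c A B n - vv q c A B (n+1)) :=
        Finset.sum_congr rfl fun n _ =>
          step_algebra q c A B n hrel (hPq n) (hPB n) h1B (h1Bq n) (h1q n)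
    _ = vv q c A B 0 - vv q c A B N := Finset.sum_range_sub' _ _
    _ = - vv q c A B N := by rw [vv_zero]; ring

lemma func_eq (q c A B : ℂ) (hrel : c * B = A * q)
    (hPq : ∀ n, qPoch q q n ≠ 0) (hPB : ∀ n, qPoch q B n ≠ 0)
    (h1B : (1:ℂ) - B ≠ 0) (h1Bq : ∀ n : ℕ, (1:ℂ) - B * q ^ n ≠ 0)
    (h1q : ∀ n : ℕ, (1:ℂ) - q * q ^ n ≠ 0)
    (hs1 : Summable (tt q c A B)) (hs2 : Summable (tt q c (A*q) (B*q)))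
    (hv : Tendsto (vv q c A B) atTop (𝓝 0)) :
    (1 - B) * ∑' n, tt q c A B n = (1 - A) * ∑' n, tt q c (A*q) (B*q) n := by
  have hL : Tendsto (fun N => (1 - B) * ∑ n ∈ range N, tt q c A B n
      - (1 - A) * ∑ n ∈ range N, tt q c (A*q) (B*q) n) atTop
      (𝓝 ((1 - B) * ∑' n, tt q c A B n - (1 - A) * ∑' n, tt q c (A*q) (B*q) n)) :=
    (hs1.hasSum.tendsto_sum_nat.const_mul _).sub (hs2.hasSum.tendsto_sum_nat.const_mul _)
  have heq : (fun N => (1 - B) * ∑ n ∈ range N, tt q c A B n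
      - (1 - A) * ∑ n ∈ range N, tt q c (A*q) (B*q) n) = fun N => - vv q c A B N :=
    funext (step_sum q c A B hrel hPq hPB h1B h1Bq h1q)
  have hR : Tendsto (fun N => (1 - B) * ∑ n ∈ range N, tt q c A B n
      - (1 - A) * ∑ n ∈ range N, tt q c (A*q) (B*q) n) atTop (𝓝 0) := by
    rw [heq]
    simpa using hv.neg
  have := tendsto_nhds_unique hL hR
  linear_combination this

lemma tt_norm_le {q : ℂ} (hq : ‖q‖ < 1) (c A B : ℂ) (n : ℕ) {CA εq εB : ℝ}
    (hCA : ‖A‖ ≤ CA) (hq' : εq ≤ ‖qPoch q q n‖) (hB' : εB ≤ ‖qPoch q B n‖)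
    (hεq : 0 < εq) (hεB : 0 < εB) :
    ‖tt q c A B n‖ ≤ Real.exp (‖c‖ * (1 - ‖q‖)⁻¹) * Real.exp (CA * (1 - ‖q‖)⁻¹) * (1 + CA)
      / (εq * εB) * (‖B‖^n * ‖q‖^(n*(n-1))) := by
  have hq0 : (0:ℝ) ≤ ‖q‖ := norm_nonneg q
  have hCA0 : (0:ℝ) ≤ CA := le_trans (norm_nonneg A) hCA
  have hinv : (0:ℝ) ≤ (1 - ‖q‖)⁻¹ := inv_nonneg.mpr (by linarith)
  have hnum : ‖qPoch q c n * qPoch q A n * B^n * q^(n*(n-1)) * (1 - A*q^(2*n))‖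
      ≤ Real.exp (‖c‖ * (1 - ‖q‖)⁻¹) * Real.exp (CA * (1 - ‖q‖)⁻¹) * (1 + CA)
        * (‖B‖^n * ‖q‖^(n*(n-1))) := by
    rw [norm_mul, norm_mul, norm_mul, norm_mul, norm_pow, norm_pow]
    have h1 := norm_qPoch_le hq c n
    have h2 : ‖qPoch q A n‖ ≤ Real.exp (CA * (1 - ‖q‖)⁻¹) :=
      le_trans (norm_qPoch_le hq A n)
        (Real.exp_le_exp.mpr (mul_le_mul_of_nonneg_right hCA hinv))
    have h3 : ‖(1:ℂ) - A*q^(2*n)‖ ≤ 1 + CA := by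
      calc ‖(1:ℂ) - A*q^(2*n)‖ ≤ ‖(1:ℂ)‖ + ‖A*q^(2*n)‖ := norm_sub_le _ _
        _ = 1 + ‖A‖ * ‖q‖^(2*n) := by rw [norm_one, norm_mul, norm_pow]
        _ ≤ 1 + CA := by
            have hle : ‖q‖^(2*n) ≤ 1 := pow_le_one₀ hq0 hq.le
            nlinarith [norm_nonneg A]
    calc ‖qPoch q c n‖ * ‖qPoch q A n‖ * ‖B‖^n * ‖q‖^(n*(n-1)) * ‖(1:ℂ) - A*q^(2*n)‖
        ≤ Real.exp (‖c‖ * (1 - ‖q‖)⁻¹) * Real.exp (CA * (1 - ‖q‖)⁻¹) * ‖B‖^n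
            * ‖q‖^(n*(n-1)) * (1 + CA) := by
          have hb1 : (0:ℝ) ≤ ‖B‖^n := by positivity
          have hb2 : (0:ℝ) ≤ ‖q‖^(n*(n-1)) := by positivity
          apply mul_le_mul
          · apply mul_le_mul
            · apply mul_le_mul
              · exact mul_le_mul h1 h2 (norm_nonneg _) (Real.exp_pos _).le
              · exact le_rfl
              · exact hb1
              · positivity
            · exact le_rfl
            · exact hb2
            · positivity
          · exact h3
          · exact norm_nonneg _
          · positivity
        _ = Real.exp (‖c‖ * (1 - ‖q‖)⁻¹) * Real.exp (CA * (1 - ‖q‖)⁻¹) * (1 + CA)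
            * (‖B‖^n * ‖q‖^(n*(n-1))) := by ring
  have hden : εq * εB ≤ ‖qPoch q q n * qPoch q B n‖ := by
    rw [norm_mul]
    exact mul_le_mul hq' hB' hεB.le (norm_nonneg _)
  rw [tt, norm_div]
  rw [div_mul_eq_mul_div]
  exact div_le_div₀ (by positivity) hnum (by positivity) hden



lemma norm_tsum_le_of_bound {f : ℕ → ℂ} {g : ℕ → ℝ} (h : ∀ n, ‖f n‖ ≤ g n)
    (hg : Summable g) : ‖∑' n, f n‖ ≤ ∑' n, g n := by
  have hf : Summable fun n => ‖f n‖ := Summable.of_nonneg_of_le (fun n => norm_nonneg _) h hg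
  refine le_trans (norm_tsum_le_tsum_norm hf) (Summable.tsum_le_tsum h hf hg)

lemma vv_norm_le {q : ℂ} (hq : ‖q‖ < 1) (c A B : ℂ) (n : ℕ) {CA εq εB : ℝ}
    (hCA : ‖A‖ ≤ CA) (hq' : εq ≤ ‖qPoch q q n‖) (hB' : εB ≤ ‖qPoch q B n‖)
    (hεq : 0 < εq) (hεB : 0 < εB) :
    ‖vv q c A B n‖ ≤ (1 + ‖B‖) * Real.exp (‖c‖ * (1 - ‖q‖)⁻¹) * Real.exp (CA * (1 - ‖q‖)⁻¹) * 2
      / (εq * εB) * (‖B‖^n * ‖q‖^(n*(n-1))) := by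
  have hq0 : (0:ℝ) ≤ ‖q‖ := norm_nonneg q
  have hCA0 : (0:ℝ) ≤ CA := le_trans (norm_nonneg A) hCA
  have hinv : (0:ℝ) ≤ (1 - ‖q‖)⁻¹ := inv_nonneg.mpr (by linarith)
  have h1B : ‖(1:ℂ) - B‖ ≤ 1 + ‖B‖ := by
    calc ‖(1:ℂ) - B‖ ≤ ‖(1:ℂ)‖ + ‖B‖ := norm_sub_le _ _
      _ = 1 + ‖B‖ := by rw [norm_one]
  have h1q : ‖(1:ℂ) - q^n‖ ≤ 2 := by
    calc ‖(1:ℂ) - q^n‖ ≤ ‖(1:ℂ)‖ + ‖q^n‖ := norm_sub_le _ _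
      _ = 1 + ‖q‖^n := by rw [norm_one, norm_pow]
      _ ≤ 2 := by
          have : ‖q‖^n ≤ 1 := pow_le_one₀ hq0 hq.le
          linarith
  have h2 : ‖qPoch q A n‖ ≤ Real.exp (CA * (1 - ‖q‖)⁻¹) :=
    le_trans (norm_qPoch_le hq A n)
      (Real.exp_le_exp.mpr (mul_le_mul_of_nonneg_right hCA hinv))
  have h1 := norm_qPoch_le hq c n
  have hnum : ‖(1 - B) * qPoch q c n * qPoch q A n * B^n * q^(n*(n-1)) * (1 - q^n)‖
      ≤ (1 + ‖B‖) * Real.exp (‖c‖ * (1 - ‖q‖)⁻¹) * Real.exp (CA * (1 - ‖q‖)⁻¹) * 2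
        * (‖B‖^n * ‖q‖^(n*(n-1))) := by
    rw [norm_mul, norm_mul, norm_mul, norm_mul, norm_mul, norm_pow, norm_pow]
    have e1 : (0:ℝ) ≤ ‖B‖^n := by positivity
    have e2 : (0:ℝ) ≤ ‖q‖^(n*(n-1)) := by positivity
    calc ‖(1:ℂ) - B‖ * ‖qPoch q c n‖ * ‖qPoch q A n‖ * ‖B‖^n * ‖q‖^(n*(n-1)) * ‖(1:ℂ) - q^n‖
        ≤ ((1 + ‖B‖) * Real.exp (‖c‖ * (1 - ‖q‖)⁻¹) * Real.exp (CA * (1 - ‖q‖)⁻¹)) * ‖B‖^n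
            * ‖q‖^(n*(n-1)) * 2 := by
          have g1 : ‖(1:ℂ) - B‖ * ‖qPoch q c n‖ * ‖qPoch q A n‖
              ≤ (1 + ‖B‖) * Real.exp (‖c‖ * (1 - ‖q‖)⁻¹) * Real.exp (CA * (1 - ‖q‖)⁻¹) := by
            apply mul_le_mul (mul_le_mul h1B h1 (norm_nonneg _) (by positivity)) h2
              (norm_nonneg _) (by positivity)
          apply mul_le_mul
          · apply mul_le_mul
            · exact mul_le_mul_of_nonneg_right g1 e1
            · exact le_rfl
            · exact e2
            · positivity
          · exact h1q
          · exact norm_nonneg _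
          · positivity
      _ = (1 + ‖B‖) * Real.exp (‖c‖ * (1 - ‖q‖)⁻¹) * Real.exp (CA * (1 - ‖q‖)⁻¹) * 2
            * (‖B‖^n * ‖q‖^(n*(n-1))) := by ring
  have hden : εq * εB ≤ ‖qPoch q q n * qPoch q B n‖ := by
    rw [norm_mul]
    exact mul_le_mul hq' hB' hεB.le (norm_nonneg _)
  rw [vv, norm_div, div_mul_eq_mul_div]
  exact div_le_div₀ (by positivity) hnum (by positivity) hden

lemma qPoch_one_eval (q x : ℂ) : qPoch q x 1 = 1 - x := by
  simp [qPoch]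

lemma bridge (q a b z : ℂ) (τ : ℕ → ℂ) (n k : ℕ) :
    qPoch q (a*q/b) n * qPoch q (a*z) n / (qPoch q q n * qPoch q (b*z) n) * (b*z)^n *
      q^(n*(n-1)) *
      (τ k * (z*q^n)^k * qPoch q (a*(z*q^n)) k / qPoch q (b*(z*q^n)) k
        - a*z*q^(2*n) *
          (τ k * (z*q^(n+1))^k * qPoch q (a/q*(z*q^(n+1))) k / qPoch q (b/q*(z*q^(n+1))) k))
    = (τ k * z^k * qPoch q (a*z) k / qPoch q (b*z) k) *
        tt q (a*q/b) (a*z*q^k) (b*z*q^k) n := by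
  by_cases hq0 : q = 0
  · subst hq0
    rcases n with _ | n
    · rcases k with _ | k
      · simp [qPoch, tt]
        ring
      · simp [tt, qPoch_zero, qPoch_of_zero, qPoch_one_eval, zero_pow, mul_zero, zero_mul]
        try ring
    · rcases n with _ | n
      · rcases k with _ | k
        · simp [tt, qPoch_zero, qPoch_of_zero, qPoch_one_eval, zero_pow, mul_zero, zero_mul]
          try ring
        · simp [tt, qPoch_zero, qPoch_of_zero, qPoch_one_eval, zero_pow, mul_zero, zero_mul]
          try ring
      · -- n ≥ 2
        rw [show (0:ℂ)^((n+2)*((n+2)-1)) = 0 by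
          apply zero_pow; simp]
        simp only [tt]
        rw [show (0:ℂ)^((n+2)*((n+2)-1)) = 0 by apply zero_pow; simp]
        ring
  · -- q ≠ 0
    rw [show a*(z*q^n) = a*z*q^n by ring, show b*(z*q^n) = b*z*q^n by ring,
        show a/q*(z*q^(n+1)) = a*z*q^n by field_simp; ring,
        show b/q*(z*q^(n+1)) = b*z*q^n by field_simp; ring]
    have SA : qPoch q (a*z) n * qPoch q (a*z*q^n) k = qPoch q (a*z) k * qPoch q (a*z*q^k) n := by
      rw [← qPoch_add, ← qPoch_add, Nat.add_comm]
    have SB : qPoch q (b*z) n * qPoch q (b*z*q^n) k = qPoch q (b*z) k * qPoch q (b*z*q^k) n := by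
      rw [← qPoch_add, ← qPoch_add, Nat.add_comm]
    set Cc : ℂ := τ k * z^k * q^(n*k) * (1 - a*z*q^k*q^(2*n)) * qPoch q (a*q/b) n * (b*z)^n *
      q^(n*(n-1)) / qPoch q q n with hCc
    have hL : qPoch q (a*q/b) n * qPoch q (a*z) n / (qPoch q q n * qPoch q (b*z) n) * (b*z)^n *
        q^(n*(n-1)) *
        (τ k * (z*q^n)^k * qPoch q (a*z*q^n) k / qPoch q (b*z*q^n) k
          - a*z*q^(2*n) * (τ k * (z*q^(n+1))^k * qPoch q (a*z*q^n) k / qPoch q (b*z*q^n) k))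
        = Cc * ((qPoch q (a*z) n * qPoch q (a*z*q^n) k) /
            (qPoch q (b*z) n * qPoch q (b*z*q^n) k)) := by
      rw [hCc]
      ring
    have hR : (τ k * z^k * qPoch q (a*z) k / qPoch q (b*z) k) *
          tt q (a*q/b) (a*z*q^k) (b*z*q^k) n
        = Cc * ((qPoch q (a*z) k * qPoch q (a*z*q^k) n) /
            (qPoch q (b*z) k * qPoch q (b*z*q^k) n)) := by
      rw [hCc, tt]
      ring
    rw [hL, hR, SA, SB]

noncomputable def TT (q a b z : ℂ) (m : ℕ) : ℂ :=
  ∑' n, tt q (a*q/b) (a*z*q^m) (b*z*q^m) n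

section Main

variable {q a b z : ℂ} {ε εq : ℝ}

/-- Bundled context for the main argument. -/
structure Ctx (q a b z : ℂ) (ε εq : ℝ) : Prop where
  hq : ‖q‖ < 1
  hb : b ≠ 0
  hε : 0 < ε
  hε1 : ε ≤ 1
  hεq : 0 < εq
  hSB : ∀ S : Finset ℕ, ε ≤ ∏ m ∈ S, ‖1 - b * z * q ^ m‖
  hlowq : ∀ k, εq ≤ ‖qPoch q q k‖

namespace Ctx

variable (C : Ctx q a b z ε εq)

include C

lemma hq0 : (0:ℝ) ≤ ‖q‖ := norm_nonneg q

lemma hlow : ∀ n k, ε ≤ ‖qPoch q (b * z * q ^ n) k‖ := fun n k => qPoch_lower C.hSB n k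

lemma hlow₀ : ∀ k, ε ≤ ‖qPoch q (b * z) k‖ := fun k => qPoch_lower₀ C.hSB k

lemma hPq : ∀ n, qPoch q q n ≠ 0 := fun n =>
  norm_pos_iff.mp (lt_of_lt_of_le C.hεq (C.hlowq n))

lemma hPB : ∀ m n, qPoch q (b * z * q ^ m) n ≠ 0 := fun m n =>
  norm_pos_iff.mp (lt_of_lt_of_le C.hε (C.hlow m n))

lemma hPB₀ : ∀ n, qPoch q (b * z) n ≠ 0 := fun n =>
  norm_pos_iff.mp (lt_of_lt_of_le C.hε (C.hlow₀ n))

lemma hbz' : ∀ m : ℕ, b * z * q ^ m ≠ 1 := by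
  intro m hm
  have h := C.hSB {m}
  rw [Finset.prod_singleton, hm] at h
  simp at h
  linarith [C.hε]

lemma h1B : ∀ m : ℕ, (1:ℂ) - b * z * q ^ m ≠ 0 := fun m =>
  sub_ne_zero.mpr (Ne.symm (C.hbz' m))

lemma h1Bq : ∀ m n : ℕ, (1:ℂ) - b * z * q ^ m * q ^ n ≠ 0 := by
  intro m n
  rw [show b * z * q ^ m * q ^ n = b * z * q ^ (m + n) by rw [pow_add]; ring]
  exact C.h1B (m + n)

lemma h1q : ∀ n : ℕ, (1:ℂ) - q * q ^ n ≠ 0 := by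
  intro n
  apply sub_ne_zero.mpr
  intro hcon
  have h2 := congrArg norm hcon.symm
  rw [norm_one, show q * q ^ n = q ^ (n+1) by rw [pow_succ]; ring, norm_pow] at h2
  have h3 : ‖q‖ ^ (n+1) < 1 := pow_lt_one₀ C.hq0 C.hq (Nat.succ_ne_zero n)
  linarith

lemma summable_tt_shift (c A : ℂ) (m : ℕ) {CA : ℝ} (hCA : ‖A‖ ≤ CA) :
    Summable (fun n => tt q c A (b * z * q ^ m) n) := by
  have hCA0 : (0:ℝ) ≤ CA := le_trans (norm_nonneg A) hCA
  set K : ℝ := Real.exp (‖c‖ * (1 - ‖q‖)⁻¹) * Real.exp (CA * (1 - ‖q‖)⁻¹) * (1 + CA) / (εq * ε)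
    with hK
  have hK0 : 0 ≤ K := by
    rw [hK]
    have := C.hε; have := C.hεq
    positivity
  apply Summable.of_norm_bounded (g := fun n => K * (‖b * z‖^n * ‖q‖^(n*(n-1))))
    (Summable.mul_left K (summable_pow_mul C.hq0 C.hq (norm_nonneg (b*z))))
  intro n
  refine le_trans (tt_norm_le C.hq c A (b*z*q^m) n hCA (C.hlowq n) (C.hlow m n) C.hεq C.hε) ?_
  rw [← hK]
  apply mul_le_mul_of_nonneg_left _ hK0
  apply mul_le_mul_of_nonneg_right _ (by positivity)
  apply pow_le_pow_left₀ (norm_nonneg _)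
  calc ‖b * z * q ^ m‖ = ‖b * z‖ * ‖q‖ ^ m := by rw [norm_mul, norm_pow]
    _ ≤ ‖b * z‖ * 1 := by
        apply mul_le_mul_of_nonneg_left (pow_le_one₀ C.hq0 C.hq.le) (norm_nonneg _)
    _ = ‖b * z‖ := mul_one _

lemma summable_tt_m (m : ℕ) :
    Summable (fun n => tt q (a*q/b) (a*z*q^m) (b*z*q^m) n) := by
  apply C.summable_tt_shift (a*q/b) (a*z*q^m) m (CA := ‖a*z‖)
  calc ‖a*z*q^m‖ = ‖a*z‖ * ‖q‖^m := by rw [norm_mul, norm_pow]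
    _ ≤ ‖a*z‖ * 1 := mul_le_mul_of_nonneg_left (pow_le_one₀ C.hq0 C.hq.le) (norm_nonneg _)
    _ = ‖a*z‖ := mul_one _

lemma tendsto_vv_m (m : ℕ) :
    Tendsto (vv q (a*q/b) (a*z*q^m) (b*z*q^m)) atTop (𝓝 0) := by
  have hCA : ‖a*z*q^m‖ ≤ ‖a*z‖ := by
    calc ‖a*z*q^m‖ = ‖a*z‖ * ‖q‖^m := by rw [norm_mul, norm_pow]
      _ ≤ ‖a*z‖ * 1 := mul_le_mul_of_nonneg_left (pow_le_one₀ C.hq0 C.hq.le) (norm_nonneg _)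
      _ = ‖a*z‖ := mul_one _
  set K : ℝ := (1 + ‖b*z*q^m‖) * Real.exp (‖a*q/b‖ * (1 - ‖q‖)⁻¹) *
    Real.exp (‖a*z‖ * (1 - ‖q‖)⁻¹) * 2 / (εq * ε) with hK
  have hK0 : 0 ≤ K := by
    rw [hK]
    have := C.hε; have := C.hεq
    positivity
  apply squeeze_zero_norm (a := fun n => K * (‖b*z*q^m‖^n * ‖q‖^(n*(n-1))))
  · intro n
    exact vv_norm_le C.hq (a*q/b) (a*z*q^m) (b*z*q^m) n hCA (C.hlowq n) (C.hlow m n)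
      C.hεq C.hε
  · have hsum : Summable (fun n => K * (‖b*z*q^m‖^n * ‖q‖^(n*(n-1)))) :=
      Summable.mul_left K (summable_pow_mul C.hq0 C.hq (norm_nonneg _))
    exact hsum.tendsto_atTop_zero

lemma func_eq_m (m : ℕ) :
    (1 - b*z*q^m) * TT q a b z m = (1 - a*z*q^m) * TT q a b z (m+1) := by
  have ea : a*z*q^m*q = a*z*q^(m+1) := by rw [pow_succ]; ring
  have eb : b*z*q^m*q = b*z*q^(m+1) := by rw [pow_succ]; ring
  have h := func_eq q (a*q/b) (a*z*q^m) (b*z*q^m)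
    (by have hb := C.hb; field_simp)
    C.hPq (C.hPB m) (C.h1B m) (C.h1Bq m) C.h1q
    (C.summable_tt_m m)
    (by rw [ea, eb]; exact C.summable_tt_m (m+1))
    (C.tendsto_vv_m m)
  rw [ea, eb] at h
  exact h

lemma TT_rec (m : ℕ) :
    TT q a b z 0 * qPoch q (b*z) m = qPoch q (a*z) m * TT q a b z m := by
  induction m with
  | zero => rw [qPoch_zero, qPoch_zero, mul_one, one_mul]
  | succ m ih =>
    have hFE := C.func_eq_m m
    rw [qPoch_succ, qPoch_succ]
    linear_combination qPoch q (a*z) m * hFE + (1 - b*z*q^m) * ih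

lemma TT_tendsto : Tendsto (TT q a b z) atTop (𝓝 1) := by
  set KD : ℝ := ∑' n : ℕ, ‖b*z‖^n * ‖q‖^(n*(n-1)) with hKD
  set K : ℝ := Real.exp (‖a*q/b‖ * (1 - ‖q‖)⁻¹) * Real.exp (‖a*z‖ * (1 - ‖q‖)⁻¹) *
    (1 + ‖a*z‖) / (εq * ε) with hK
  have hK0 : 0 ≤ K := by
    rw [hK]; have := C.hε; have := C.hεq; positivity
  have hKD0 : 0 ≤ KD := by
    rw [hKD]
    apply tsum_nonneg
    intro n; positivity
  have hDsum : Summable (fun n : ℕ => ‖b*z‖^n * ‖q‖^(n*(n-1))) :=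
    summable_pow_mul C.hq0 C.hq (norm_nonneg _)
  have key : ∀ m, ‖TT q a b z m - 1‖ ≤ (‖a*z‖ + K * ‖b*z‖ * KD) * ‖q‖^m := by
    intro m
    have hCA : ‖a*z*q^m‖ ≤ ‖a*z‖ := by
      calc ‖a*z*q^m‖ = ‖a*z‖ * ‖q‖^m := by rw [norm_mul, norm_pow]
        _ ≤ ‖a*z‖ * 1 := mul_le_mul_of_nonneg_left (pow_le_one₀ C.hq0 C.hq.le) (norm_nonneg _)
        _ = ‖a*z‖ := mul_one _
    have hsm := C.summable_tt_m m
    have hsplit : TT q a b z m = tt q (a*q/b) (a*z*q^m) (b*z*q^m) 0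
        + ∑' n, tt q (a*q/b) (a*z*q^m) (b*z*q^m) (n+1) := by
      rw [TT]
      exact Summable.tsum_eq_zero_add hsm
    rw [hsplit, tt_zero]
    have hqm1 : ‖q‖^m ≤ 1 := pow_le_one₀ C.hq0 C.hq.le
    have htail : ‖∑' n, tt q (a*q/b) (a*z*q^m) (b*z*q^m) (n+1)‖
        ≤ K * ‖b*z‖ * KD * ‖q‖^m := by
      have hbnd : ∀ n : ℕ, ‖tt q (a*q/b) (a*z*q^m) (b*z*q^m) (n+1)‖
          ≤ (K * ‖b*z‖ * ‖q‖^m) * (‖b*z‖^n * ‖q‖^(n*(n-1))) := by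
        intro n
        have h1 := tt_norm_le C.hq (a*q/b) (a*z*q^m) (b*z*q^m) (n+1) hCA
          (C.hlowq (n+1)) (C.hlow m (n+1)) C.hεq C.hε
        rw [← hK] at h1
        refine le_trans h1 ?_
        have e1 : ‖b*z*q^m‖^(n+1) ≤ ‖b*z‖^(n+1) * ‖q‖^m := by
          rw [show (b*z*q^m) = (b*z)*q^m by ring, norm_mul, mul_pow, norm_pow]
          apply mul_le_mul_of_nonneg_left _ (by positivity)
          calc (‖q‖^m)^(n+1) ≤ (‖q‖^m)^1 :=
                pow_le_pow_of_le_one (by positivity) hqm1 (by omega)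
            _ = ‖q‖^m := pow_one _
        have e2 : ‖q‖^((n+1)*((n+1)-1)) ≤ ‖q‖^(n*(n-1)) := by
          apply pow_le_pow_of_le_one C.hq0 C.hq.le
          simp only [Nat.add_sub_cancel]
          calc n*(n-1) ≤ n*n := Nat.mul_le_mul_left n (Nat.sub_le n 1)
            _ ≤ (n+1)*n := Nat.mul_le_mul_right n (Nat.le_succ n)
        calc K * (‖b*z*q^m‖^(n+1) * ‖q‖^((n+1)*((n+1)-1)))
            ≤ K * ((‖b*z‖^(n+1) * ‖q‖^m) * ‖q‖^(n*(n-1))) := by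
              apply mul_le_mul_of_nonneg_left _ hK0
              exact mul_le_mul e1 e2 (by positivity) (by positivity)
          _ = (K * ‖b*z‖ * ‖q‖^m) * (‖b*z‖^n * ‖q‖^(n*(n-1))) := by ring
      have hgs : Summable (fun n : ℕ => (K * ‖b*z‖ * ‖q‖^m) * (‖b*z‖^n * ‖q‖^(n*(n-1)))) :=
        Summable.mul_left _ hDsum
      refine le_trans (norm_tsum_le_of_bound hbnd hgs) ?_
      rw [tsum_mul_left, ← hKD]
      have : K * ‖b*z‖ * ‖q‖^m * KD = K * ‖b*z‖ * KD * ‖q‖^m := by ring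
      linarith [le_of_eq this]
    calc ‖1 - a*z*q^m + ∑' n, tt q (a*q/b) (a*z*q^m) (b*z*q^m) (n+1) - 1‖
        = ‖-(a*z*q^m) + ∑' n, tt q (a*q/b) (a*z*q^m) (b*z*q^m) (n+1)‖ := by
          congr 1
          ring
      _ ≤ ‖a*z*q^m‖ + ‖∑' n, tt q (a*q/b) (a*z*q^m) (b*z*q^m) (n+1)‖ := by
          refine le_trans (norm_add_le _ _) ?_
          rw [norm_neg]
      _ ≤ ‖a*z‖ * ‖q‖^m + K * ‖b*z‖ * KD * ‖q‖^m := by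
          have : ‖a*z*q^m‖ = ‖a*z‖ * ‖q‖^m := by rw [norm_mul, norm_pow]
          linarith [htail]
      _ = (‖a*z‖ + K * ‖b*z‖ * KD) * ‖q‖^m := by ring
  have hlim : Tendsto (fun m => TT q a b z m - 1) atTop (𝓝 0) := by
    apply squeeze_zero_norm key
    have := (tendsto_pow_atTop_nhds_zero_of_lt_one C.hq0 C.hq).const_mul
      (‖a*z‖ + K * ‖b*z‖ * KD)
    simpa using this
  have := hlim.add_const 1
  simpa using this

lemma TT_prod :
    TT q a b z 0 * (∏' i : ℕ, (1 - b*z*q^i)) = ∏' i : ℕ, (1 - a*z*q^i) := by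
  have hA := (multipliable_one_sub C.hq (a*z)).hasProd.tendsto_prod_nat
  have hB := (multipliable_one_sub C.hq (b*z)).hasProd.tendsto_prod_nat
  have hqa : ∀ (x : ℂ) (N : ℕ), ∏ i ∈ range N, (1 - x*q^i) = qPoch q x N := fun x N => rfl
  have hL : Tendsto (fun N => TT q a b z 0 * qPoch q (b*z) N) atTop
      (𝓝 (TT q a b z 0 * ∏' i : ℕ, (1 - b*z*q^i))) := by
    apply Tendsto.const_mul
    exact hB
  have hR : Tendsto (fun N => qPoch q (a*z) N * TT q a b z N) atTop
      (𝓝 ((∏' i : ℕ, (1 - a*z*q^i)) * 1)) := Tendsto.mul hA C.TT_tendsto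
  have heq : (fun N => TT q a b z 0 * qPoch q (b*z) N)
      = fun N => qPoch q (a*z) N * TT q a b z N := funext fun N => C.TT_rec N
  rw [heq] at hL
  have := tendsto_nhds_unique hL hR
  rw [mul_one] at this
  exact this

lemma prodB_norm : ε ≤ ‖∏' i : ℕ, (1 - b*z*q^i)‖ := by
  have hB := (multipliable_one_sub C.hq (b*z)).hasProd.tendsto_prod_nat
  have := hB.norm
  apply ge_of_tendsto' this
  intro N
  exact C.hlow₀ N

lemma prodB_ne : (∏' i : ℕ, (1 - b*z*q^i)) ≠ 0 :=
  norm_pos_iff.mp (lt_of_lt_of_le C.hε C.prodB_norm)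

lemma TT_zero_eq :
    TT q a b z 0 = (∏' i : ℕ, (1 - a*z*q^i)) / (∏' i : ℕ, (1 - b*z*q^i)) := by
  rw [eq_div_iff C.prodB_ne]
  exact C.TT_prod

lemma tt_bound_m (c A : ℂ) (m : ℕ) {CA : ℝ} (hCA : ‖A‖ ≤ CA) (n : ℕ) :
    ‖tt q c A (b*z*q^m) n‖
      ≤ Real.exp (‖c‖ * (1 - ‖q‖)⁻¹) * Real.exp (CA * (1 - ‖q‖)⁻¹) * (1 + CA) / (εq * ε)
        * (‖b*z‖^n * ‖q‖^(n*(n-1))) := by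
  have hCA0 : (0:ℝ) ≤ CA := le_trans (norm_nonneg A) hCA
  have hK0 : 0 ≤ Real.exp (‖c‖ * (1 - ‖q‖)⁻¹) * Real.exp (CA * (1 - ‖q‖)⁻¹) * (1 + CA)
      / (εq * ε) := by
    have := C.hε; have := C.hεq
    positivity
  refine le_trans (tt_norm_le C.hq c A (b*z*q^m) n hCA (C.hlowq n) (C.hlow m n) C.hεq C.hε) ?_
  apply mul_le_mul_of_nonneg_left _ hK0
  apply mul_le_mul_of_nonneg_right _ (by positivity)
  apply pow_le_pow_left₀ (norm_nonneg _)
  calc ‖b * z * q ^ m‖ = ‖b * z‖ * ‖q‖ ^ m := by rw [norm_mul, norm_pow]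
    _ ≤ ‖b * z‖ * 1 := mul_le_mul_of_nonneg_left (pow_le_one₀ C.hq0 C.hq.le) (norm_nonneg _)
    _ = ‖b * z‖ := mul_one _

lemma summable_G (τ : ℕ → ℂ) (hτ : Summable fun k => ‖τ k‖ * (‖z‖+1)^k)
    (w α β : ℂ) (hw : ‖w‖ ≤ ‖z‖) (hα : ‖α*w‖ ≤ ‖a*z‖)
    (hβ : ∀ k, ε ≤ ‖qPoch q (β*w) k‖) :
    Summable (fun k => τ k * w^k * qPoch q (α*w) k / qPoch q (β*w) k) ∧
    ‖∑' k, τ k * w^k * qPoch q (α*w) k / qPoch q (β*w) k‖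
      ≤ (∑' k, ‖τ k‖ * (‖z‖+1)^k) * (Real.exp (‖a*z‖ * (1 - ‖q‖)⁻¹) / ε) := by
  set Ca : ℝ := Real.exp (‖a*z‖ * (1 - ‖q‖)⁻¹) with hCadef
  have hCa0 : 0 < Ca := Real.exp_pos _
  have hinv : (0:ℝ) ≤ (1 - ‖q‖)⁻¹ := inv_nonneg.mpr (by linarith [C.hq])
  have hb : ∀ k, ‖τ k * w^k * qPoch q (α*w) k / qPoch q (β*w) k‖
      ≤ ‖τ k‖ * (‖z‖+1)^k * (Ca/ε) := by
    intro k
    rw [norm_div, norm_mul, norm_mul, norm_pow]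
    have h1 : ‖qPoch q (α*w) k‖ ≤ Ca :=
      le_trans (norm_qPoch_le C.hq _ k)
        (Real.exp_le_exp.mpr (mul_le_mul_of_nonneg_right hα hinv))
    have h2 : ‖w‖^k ≤ (‖z‖+1)^k :=
      pow_le_pow_left₀ (norm_nonneg w) (by linarith [norm_nonneg z]) k
    calc ‖τ k‖ * ‖w‖^k * ‖qPoch q (α*w) k‖ / ‖qPoch q (β*w) k‖
        ≤ ‖τ k‖ * (‖z‖+1)^k * Ca / ε := by
          apply div_le_div₀ (by positivity) _ C.hε (hβ k)
          apply mul_le_mul _ h1 (norm_nonneg _) (by positivity)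
          exact mul_le_mul_of_nonneg_left h2 (norm_nonneg _)
      _ = ‖τ k‖ * (‖z‖+1)^k * (Ca/ε) := by ring
  have hsum : Summable (fun k => τ k * w^k * qPoch q (α*w) k / qPoch q (β*w) k) :=
    Summable.of_norm_bounded (hτ.mul_right (Ca/ε)) hb
  refine ⟨hsum, ?_⟩
  refine le_trans (norm_tsum_le_of_bound hb (hτ.mul_right (Ca/ε))) ?_
  rw [tsum_mul_right]

end Ctx

end Main
end GTaux


open GTaux

/-- Theorem 1.6: the general transformation
`((az;q)_∞/(bz;q)_∞) G(z)
  = ∑_n (aq/b;q)_n (az;q)_n / ((q;q)_n (bz;q)_n) (bz)^n q^{n(n−1)}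
      (G̃(zq^n;a,b) − a z q^{2n} G̃(zq^{n+1};a/q,b/q))`,
all series involved being absolutely convergent. -/
theorem general_transformation (q a b z : ℂ) (hq : ‖q‖ < 1) (hb : b ≠ 0)
    (hbz : ∀ m : ℕ, b * z * q ^ m ≠ 1)
    (t : ℕ → ℂ) (ht : ∀ r : ℝ, 0 < r → Summable (fun n : ℕ => ‖t n‖ * r ^ n)) :
    Summable (fun n : ℕ => t n * z ^ n) ∧
    (∀ n : ℕ, Summable (fun k : ℕ =>
      t k * (z * q ^ n) ^ k * qPoch q (a * (z * q ^ n)) k /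
        qPoch q (b * (z * q ^ n)) k)) ∧
    (∀ n : ℕ, Summable (fun k : ℕ =>
      t k * (z * q ^ (n + 1)) ^ k * qPoch q (a / q * (z * q ^ (n + 1))) k /
        qPoch q (b / q * (z * q ^ (n + 1))) k)) ∧
    Summable (fun n : ℕ =>
      qPoch q (a * q / b) n * qPoch q (a * z) n /
          (qPoch q q n * qPoch q (b * z) n) *
        (b * z) ^ n * q ^ (n * (n - 1)) *
        (Gtilde q t (z * q ^ n) a b -
          a * z * q ^ (2 * n) * Gtilde q t (z * q ^ (n + 1)) (a / q) (b / q))) ∧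
    ((∏' i : ℕ, (1 - a * z * q ^ i)) / (∏' i : ℕ, (1 - b * z * q ^ i))) *
        (∑' n : ℕ, t n * z ^ n)
      = ∑' n : ℕ,
          qPoch q (a * q / b) n * qPoch q (a * z) n /
              (qPoch q q n * qPoch q (b * z) n) *
            (b * z) ^ n * q ^ (n * (n - 1)) *
            (Gtilde q t (z * q ^ n) a b -
              a * z * q ^ (2 * n) * Gtilde q t (z * q ^ (n + 1)) (a / q) (b / q)) := by
  classical
  obtain ⟨ε, hε, hε1, hSB⟩ := exists_qPoch_lower hq (b*z) hbz
  have hq1 : ∀ m : ℕ, q * q ^ m ≠ 1 := by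
    intro m hcon
    have h2 := congrArg norm hcon
    rw [show q * q^m = q^(m+1) by rw [pow_succ]; ring, norm_pow, norm_one] at h2
    have h3 : ‖q‖^(m+1) < 1 := pow_lt_one₀ (norm_nonneg q) hq (Nat.succ_ne_zero m)
    linarith
  obtain ⟨εq, hεq, hεq1, hSq⟩ := exists_qPoch_lower hq q hq1
  have C : Ctx q a b z ε εq := ⟨hq, hb, hε, hε1, hεq, hSB, fun k => qPoch_lower₀ hSq k⟩
  have hz1 : (0:ℝ) < ‖z‖ + 1 := by positivity
  have hτ : Summable (fun k => ‖t k‖ * (‖z‖+1)^k) := ht _ hz1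
  have hq0' : (0:ℝ) ≤ ‖q‖ := norm_nonneg q
  -- item 1
  have item1 : Summable (fun n : ℕ => t n * z^n) := by
    apply Summable.of_norm_bounded hτ
    intro n
    rw [norm_mul, norm_pow]
    exact mul_le_mul_of_nonneg_left
      (pow_le_pow_left₀ (norm_nonneg z) (by linarith) n) (norm_nonneg _)
  -- item 2 with bound
  have hwn : ∀ n : ℕ, ‖z * q^n‖ ≤ ‖z‖ := by
    intro n
    calc ‖z * q^n‖ = ‖z‖ * ‖q‖^n := by rw [norm_mul, norm_pow]
      _ ≤ ‖z‖ * 1 := mul_le_mul_of_nonneg_left (pow_le_one₀ hq0' hq.le) (norm_nonneg z)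
      _ = ‖z‖ := mul_one _
  have pack2 : ∀ n : ℕ,
      Summable (fun k : ℕ => t k * (z * q ^ n) ^ k * qPoch q (a * (z * q ^ n)) k /
        qPoch q (b * (z * q ^ n)) k) ∧
      ‖∑' k : ℕ, t k * (z * q ^ n) ^ k * qPoch q (a * (z * q ^ n)) k /
        qPoch q (b * (z * q ^ n)) k‖
        ≤ (∑' k, ‖t k‖ * (‖z‖+1)^k) * (Real.exp (‖a*z‖ * (1 - ‖q‖)⁻¹) / ε) := by
    intro n
    refine C.summable_G t hτ (z*q^n) a b (hwn n) ?_ ?_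
    · rw [show a*(z*q^n) = (a*z)*q^n by ring, norm_mul, norm_pow]
      calc ‖a*z‖ * ‖q‖^n ≤ ‖a*z‖ * 1 :=
            mul_le_mul_of_nonneg_left (pow_le_one₀ hq0' hq.le) (norm_nonneg _)
        _ = ‖a*z‖ := mul_one _
    · intro k
      rw [show b*(z*q^n) = b*z*q^n by ring]
      exact C.hlow n k
  have pack3 : ∀ n : ℕ,
      Summable (fun k : ℕ => t k * (z * q ^ (n+1)) ^ k * qPoch q (a/q * (z * q ^ (n+1))) k /
        qPoch q (b/q * (z * q ^ (n+1))) k) ∧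
      ‖∑' k : ℕ, t k * (z * q ^ (n+1)) ^ k * qPoch q (a/q * (z * q ^ (n+1))) k /
        qPoch q (b/q * (z * q ^ (n+1))) k‖
        ≤ (∑' k, ‖t k‖ * (‖z‖+1)^k) * (Real.exp (‖a*z‖ * (1 - ‖q‖)⁻¹) / ε) := by
    intro n
    refine C.summable_G t hτ (z*q^(n+1)) (a/q) (b/q) (hwn (n+1)) ?_ ?_
    · by_cases hqz : q = 0
      · subst hqz
        rw [show z * (0:ℂ)^(n+1) = 0 by simp, mul_zero]
        simp only [norm_zero]
        positivity
      · rw [show a/q*(z*q^(n+1)) = (a*z)*q^n by field_simp; ring, norm_mul, norm_pow]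
        calc ‖a*z‖ * ‖q‖^n ≤ ‖a*z‖ * 1 :=
              mul_le_mul_of_nonneg_left (pow_le_one₀ hq0' hq.le) (norm_nonneg _)
          _ = ‖a*z‖ := mul_one _
    · intro k
      by_cases hqz : q = 0
      · subst hqz
        rw [show b/(0:ℂ)*(z*(0:ℂ)^(n+1)) = 0 by simp, qPoch_of_zero]
        simpa using hε1
      · rw [show b/q*(z*q^(n+1)) = b*z*q^n by field_simp; ring]
        exact C.hlow n k
  have item2 : ∀ n : ℕ, Summable (fun k : ℕ =>
      t k * (z * q ^ n) ^ k * qPoch q (a * (z * q ^ n)) k /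
        qPoch q (b * (z * q ^ n)) k) := fun n => (pack2 n).1
  have item3 : ∀ n : ℕ, Summable (fun k : ℕ =>
      t k * (z * q ^ (n + 1)) ^ k * qPoch q (a / q * (z * q ^ (n + 1))) k /
        qPoch q (b / q * (z * q ^ (n + 1))) k) := fun n => (pack3 n).1
  -- Gtilde norm bounds
  set MG : ℝ := (∑' k, ‖t k‖ * (‖z‖+1)^k) * (Real.exp (‖a*z‖ * (1 - ‖q‖)⁻¹) / ε) with hMGdef
  have hMG0 : 0 ≤ MG := by
    rw [hMGdef]
    have h1 : 0 ≤ ∑' k, ‖t k‖ * (‖z‖+1)^k := tsum_nonneg (fun k => by positivity)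
    positivity
  have hG1 : ∀ n : ℕ, ‖Gtilde q t (z * q ^ n) a b‖ ≤ MG := by
    intro n
    rw [Gtilde]
    exact (pack2 n).2
  have hG2 : ∀ n : ℕ, ‖Gtilde q t (z * q ^ (n+1)) (a/q) (b/q)‖ ≤ MG := by
    intro n
    rw [Gtilde]
    exact (pack3 n).2
  have hGdiff : ∀ n : ℕ, ‖Gtilde q t (z * q ^ n) a b -
      a * z * q ^ (2 * n) * Gtilde q t (z * q ^ (n + 1)) (a / q) (b / q)‖
      ≤ MG + ‖a*z‖ * MG := by
    intro n
    refine le_trans (norm_sub_le _ _) ?_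
    have h2 : ‖a * z * q ^ (2 * n) * Gtilde q t (z * q ^ (n + 1)) (a / q) (b / q)‖
        ≤ ‖a*z‖ * MG := by
      rw [show a * z * q ^ (2*n) * Gtilde q t (z * q ^ (n + 1)) (a / q) (b / q)
          = (a*z) * (q^(2*n) * Gtilde q t (z * q ^ (n + 1)) (a / q) (b / q)) by ring,
        norm_mul]
      apply mul_le_mul_of_nonneg_left _ (norm_nonneg _)
      rw [norm_mul, norm_pow]
      calc ‖q‖^(2*n) * ‖Gtilde q t (z * q ^ (n + 1)) (a / q) (b / q)‖
          ≤ 1 * MG := mul_le_mul (pow_le_one₀ hq0' hq.le) (hG2 n) (norm_nonneg _) zero_le_one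
        _ = MG := one_mul _
    linarith [hG1 n]
  -- norm bound for the coefficient
  set Kc : ℝ := Real.exp (‖a*q/b‖ * (1 - ‖q‖)⁻¹) * Real.exp (‖a*z‖ * (1 - ‖q‖)⁻¹) / (εq * ε)
    with hKcdef
  have hKc0 : 0 ≤ Kc := by rw [hKcdef]; positivity
  have hcn : ∀ n : ℕ, ‖qPoch q (a * q / b) n * qPoch q (a * z) n /
      (qPoch q q n * qPoch q (b * z) n) * (b * z) ^ n * q ^ (n * (n - 1))‖
      ≤ Kc * (‖b*z‖^n * ‖q‖^(n*(n-1))) := by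
    intro n
    rw [norm_mul, norm_mul, norm_div, norm_pow, norm_pow]
    have h1 : ‖qPoch q (a*q/b) n * qPoch q (a*z) n‖
        ≤ Real.exp (‖a*q/b‖ * (1 - ‖q‖)⁻¹) * Real.exp (‖a*z‖ * (1 - ‖q‖)⁻¹) := by
      rw [norm_mul]
      exact mul_le_mul (norm_qPoch_le hq _ n) (norm_qPoch_le hq _ n) (norm_nonneg _)
        (Real.exp_pos _).le
    have h2 : εq * ε ≤ ‖qPoch q q n * qPoch q (b*z) n‖ := by
      rw [norm_mul]
      exact mul_le_mul (C.hlowq n) (C.hlow₀ n) hε.le (norm_nonneg _)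
    have h3 : ‖qPoch q (a*q/b) n * qPoch q (a*z) n‖ / ‖qPoch q q n * qPoch q (b*z) n‖
        ≤ Kc := by
      rw [hKcdef]
      exact div_le_div₀ (by positivity) h1 (by positivity) h2
    calc ‖qPoch q (a*q/b) n * qPoch q (a*z) n‖ / ‖qPoch q q n * qPoch q (b*z) n‖
          * ‖b*z‖^n * ‖q‖^(n*(n-1))
        ≤ Kc * ‖b*z‖^n * ‖q‖^(n*(n-1)) := by
          apply mul_le_mul_of_nonneg_right _ (by positivity)
          exact mul_le_mul_of_nonneg_right h3 (by positivity)
      _ = Kc * (‖b*z‖^n * ‖q‖^(n*(n-1))) := by ring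
  -- item 4
  have item4 : Summable (fun n : ℕ =>
      qPoch q (a * q / b) n * qPoch q (a * z) n /
          (qPoch q q n * qPoch q (b * z) n) *
        (b * z) ^ n * q ^ (n * (n - 1)) *
        (Gtilde q t (z * q ^ n) a b -
          a * z * q ^ (2 * n) * Gtilde q t (z * q ^ (n + 1)) (a / q) (b / q))) := by
    apply Summable.of_norm_bounded
      (g := fun n => (Kc * (MG + ‖a*z‖ * MG)) * (‖b*z‖^n * ‖q‖^(n*(n-1))))
      (Summable.mul_left _ (summable_pow_mul hq0' hq (norm_nonneg (b*z))))
    intro n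
    rw [norm_mul]
    calc ‖qPoch q (a * q / b) n * qPoch q (a * z) n /
          (qPoch q q n * qPoch q (b * z) n) * (b * z) ^ n * q ^ (n * (n - 1))‖
          * ‖Gtilde q t (z * q ^ n) a b -
            a * z * q ^ (2 * n) * Gtilde q t (z * q ^ (n + 1)) (a / q) (b / q)‖
        ≤ (Kc * (‖b*z‖^n * ‖q‖^(n*(n-1)))) * (MG + ‖a*z‖ * MG) :=
          mul_le_mul (hcn n) (hGdiff n) (norm_nonneg _) (by positivity)
      _ = (Kc * (MG + ‖a*z‖ * MG)) * (‖b*z‖^n * ‖q‖^(n*(n-1))) := by ring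
  refine ⟨item1, item2, item3, item4, ?_⟩
  -- main identity
  set FF : ℕ → ℕ → ℂ := fun n k =>
    (t k * z^k * qPoch q (a*z) k / qPoch q (b*z) k) *
      tt q (a*q/b) (a*z*q^k) (b*z*q^k) n with hFFdef
  have hstep1 : ∀ n : ℕ,
      qPoch q (a * q / b) n * qPoch q (a * z) n /
          (qPoch q q n * qPoch q (b * z) n) *
        (b * z) ^ n * q ^ (n * (n - 1)) *
        (Gtilde q t (z * q ^ n) a b -
          a * z * q ^ (2 * n) * Gtilde q t (z * q ^ (n + 1)) (a / q) (b / q))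
      = ∑' k, FF n k := by
    intro n
    have hsub : Gtilde q t (z * q ^ n) a b -
        a * z * q ^ (2 * n) * Gtilde q t (z * q ^ (n + 1)) (a / q) (b / q)
        = ∑' k : ℕ, (t k * (z * q ^ n) ^ k * qPoch q (a * (z * q ^ n)) k /
            qPoch q (b * (z * q ^ n)) k
          - a * z * q ^ (2 * n) *
            (t k * (z * q ^ (n+1)) ^ k * qPoch q (a/q * (z * q ^ (n+1))) k /
              qPoch q (b/q * (z * q ^ (n+1))) k)) := by
      rw [Gtilde, Gtilde, ← tsum_mul_left, ← Summable.tsum_sub (item2 n) ((item3 n).mul_left _)]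
    rw [hsub, ← tsum_mul_left]
    apply tsum_congr
    intro k
    exact bridge q a b z t n k
  -- summability of the double sum
  have hFFbound : ∀ (n k : ℕ), ‖FF n k‖
      ≤ (Real.exp (‖a*q/b‖ * (1 - ‖q‖)⁻¹) * Real.exp (‖a*z‖ * (1 - ‖q‖)⁻¹) * (1 + ‖a*z‖)
          / (εq * ε) * (‖b*z‖^n * ‖q‖^(n*(n-1))))
        * (‖t k‖ * (‖z‖+1)^k * (Real.exp (‖a*z‖ * (1 - ‖q‖)⁻¹) / ε)) := by
    intro n k
    rw [hFFdef]
    simp only []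
    rw [norm_mul]
    have hCAk : ‖a*z*q^k‖ ≤ ‖a*z‖ := by
      calc ‖a*z*q^k‖ = ‖a*z‖ * ‖q‖^k := by rw [norm_mul, norm_pow]
        _ ≤ ‖a*z‖ * 1 := mul_le_mul_of_nonneg_left (pow_le_one₀ hq0' hq.le) (norm_nonneg _)
        _ = ‖a*z‖ := mul_one _
    have h1 : ‖t k * z^k * qPoch q (a*z) k / qPoch q (b*z) k‖
        ≤ ‖t k‖ * (‖z‖+1)^k * (Real.exp (‖a*z‖ * (1 - ‖q‖)⁻¹) / ε) := by
      rw [norm_div, norm_mul, norm_mul, norm_pow]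
      calc ‖t k‖ * ‖z‖^k * ‖qPoch q (a*z) k‖ / ‖qPoch q (b*z) k‖
          ≤ ‖t k‖ * (‖z‖+1)^k * Real.exp (‖a*z‖ * (1 - ‖q‖)⁻¹) / ε := by
            apply div_le_div₀ (by positivity) _ hε (C.hlow₀ k)
            apply mul_le_mul _ (norm_qPoch_le hq _ k) (norm_nonneg _) (by positivity)
            exact mul_le_mul_of_nonneg_left
              (pow_le_pow_left₀ (norm_nonneg z) (by linarith) k) (norm_nonneg _)
        _ = ‖t k‖ * (‖z‖+1)^k * (Real.exp (‖a*z‖ * (1 - ‖q‖)⁻¹) / ε) := by ring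
    have h2 := C.tt_bound_m (a*q/b) (a*z*q^k) k hCAk n
    calc ‖t k * z^k * qPoch q (a*z) k / qPoch q (b*z) k‖ *
          ‖tt q (a*q/b) (a*z*q^k) (b*z*q^k) n‖
        ≤ (‖t k‖ * (‖z‖+1)^k * (Real.exp (‖a*z‖ * (1 - ‖q‖)⁻¹) / ε)) *
          (Real.exp (‖a*q/b‖ * (1 - ‖q‖)⁻¹) * Real.exp (‖a*z‖ * (1 - ‖q‖)⁻¹) * (1 + ‖a*z‖)
            / (εq * ε) * (‖b*z‖^n * ‖q‖^(n*(n-1)))) :=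
          mul_le_mul h1 h2 (norm_nonneg _) (by positivity)
      _ = _ := by ring
  have hFF : Summable (Function.uncurry FF) := by
    apply Summable.of_norm_bounded
      (g := fun p : ℕ × ℕ =>
        (Real.exp (‖a*q/b‖ * (1 - ‖q‖)⁻¹) * Real.exp (‖a*z‖ * (1 - ‖q‖)⁻¹) * (1 + ‖a*z‖)
          / (εq * ε) * (‖b*z‖^p.1 * ‖q‖^(p.1*(p.1-1))))
        * (‖t p.2‖ * (‖z‖+1)^p.2 * (Real.exp (‖a*z‖ * (1 - ‖q‖)⁻¹) / ε)))
    · exact Summable.mul_of_nonneg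
        (f := fun n : ℕ => Real.exp (‖a*q/b‖ * (1 - ‖q‖)⁻¹) * Real.exp (‖a*z‖ * (1 - ‖q‖)⁻¹)
          * (1 + ‖a*z‖) / (εq * ε) * (‖b*z‖^n * ‖q‖^(n*(n-1))))
        (g := fun k : ℕ => ‖t k‖ * (‖z‖+1)^k * (Real.exp (‖a*z‖ * (1 - ‖q‖)⁻¹) / ε))
        (Summable.mul_left _ (summable_pow_mul hq0' hq (norm_nonneg (b*z))))
        (hτ.mul_right _)
        (fun n => by positivity)
        (fun k => by positivity)
    · intro p
      exact hFFbound p.1 p.2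
  have hslice1 : ∀ n, Summable (fun k => FF n k) := fun n => hFF.prod_factor n
  have hslice2 : ∀ k, Summable (fun n => FF n k) := fun k => hFF.prod_symm.prod_factor k
  have hcomm : ∑' (n : ℕ), ∑' (k : ℕ), FF n k = ∑' (k : ℕ), ∑' (n : ℕ), FF n k :=
    Summable.tsum_comm' (f := fun k n => FF n k) hFF.prod_symm hslice2 hslice1
  have hstep2 : ∀ k : ℕ, ∑' n, FF n k = t k * z^k * TT q a b z 0 := by
    intro k
    rw [hFFdef]
    simp only []
    rw [tsum_mul_left]
    have hTTk : (∑' n, tt q (a*q/b) (a*z*q^k) (b*z*q^k) n) = TT q a b z k := rfl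
    rw [hTTk]
    have h := C.TT_rec k
    have hPbk := C.hPB₀ k
    have e1 : t k * z^k * qPoch q (a*z) k / qPoch q (b*z) k * TT q a b z k
        = t k * z^k * (qPoch q (a*z) k * TT q a b z k) / qPoch q (b*z) k := by ring
    rw [e1, ← h]
    rw [show t k * z^k * (TT q a b z 0 * qPoch q (b*z) k) / qPoch q (b*z) k
        = t k * z^k * TT q a b z 0 * (qPoch q (b*z) k / qPoch q (b*z) k) from by ring,
      div_self hPbk, mul_one]
  calc ((∏' i : ℕ, (1 - a * z * q ^ i)) / (∏' i : ℕ, (1 - b * z * q ^ i))) *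
        (∑' n : ℕ, t n * z ^ n)
      = TT q a b z 0 * (∑' n : ℕ, t n * z ^ n) := by rw [C.TT_zero_eq]
    _ = ∑' k : ℕ, TT q a b z 0 * (t k * z ^ k) := (tsum_mul_left).symm
    _ = ∑' k : ℕ, ∑' n : ℕ, FF n k := by
        apply tsum_congr
        intro k
        rw [hstep2 k]
        ring
    _ = ∑' n : ℕ, ∑' k : ℕ, FF n k := hcomm.symm
    _ = _ := by
        apply tsum_congr
        intro n
        rw [hstep1 n]
end
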